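/- arXiv:2312.11543 — 7 statements merged into one kernel-verified Lean document; each statement's English description precedes it below -/
import Mathlib

section
/- Cayley's formula: the number of spanning trees of the complete graph K_n on n ≥ 2 vertices equals n^{n−2}. -/
/-!
Prüfer's bijection. In a tree on a finite linearly ordered set `S` with `#S ≥ 3`, delete the
least leaf and record its neighbour; iterating down to two vertices gives a word of length
`#S - 2` over `S`, and a vertex occurs in it iff it is not a leaf. Conversely a word determines
its tree: the vertices missing from it are the leaves, so the least missing one is the leaf that
was deleted first, and it hangs on the first letter. Hence trees on `S` correspond to words in
`S ^ (#S - 2)`.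
-/

open Finset

lemma Nat.card_list_length_eq_forall_mem {α : Type*} (S : Finset α) (k : ℕ) :
    Nat.card {s : List α // s.length = k ∧ ∀ x ∈ s, x ∈ S} = #S ^ k := by
  let f : List.Vector S k → {s : List α // s.length = k ∧ ∀ x ∈ s, x ∈ S} :=
    fun v => ⟨v.1.map (↑), by simp [v.2], by simp +contextual⟩
  have hf : f.Bijective := by
    refine ⟨fun v w h => Subtype.ext ((List.map_injective_iff.mpr Subtype.val_injective)
      (congrArg Subtype.val h)), ?_⟩
    rintro ⟨s, hlen, hmem⟩
    lift s to List S using hmem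
    exact ⟨⟨s, by simpa using hlen⟩, rfl⟩
  rw [← Nat.card_congr (Equiv.ofBijective f hf), Nat.card_eq_fintype_card, card_vector,
    Fintype.card_coe]

lemma Finset.insert_erase_sdiff_erase {α : Type*} [DecidableEq α] {S T : Finset α} {l a : α}
    (hl : l ∈ S) (hlT : l ∉ insert a T) :
    insert l (((S.erase l) \ T).erase a) = S \ insert a T := by
  ext x
  simp only [mem_insert, mem_erase, mem_sdiff, not_or] at hlT ⊢
  grind

namespace SimpleGraph

variable {α : Type*} {G : SimpleGraph α} {S : Finset α} {u v l a : α}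

/-- Trees on `S` are graphs on the ambient type with all edges inside `S`, so that deleting a leaf
does not change the vertex type. -/
structure IsTreeOn (G : SimpleGraph α) (S : Finset α) : Prop where
  support_subset : G.support ⊆ S
  reachable : ∀ ⦃u⦄, u ∈ S → ∀ ⦃v⦄, v ∈ S → G.Reachable u v
  isAcyclic : G.IsAcyclic

open Classical in
noncomputable def leaves (G : SimpleGraph α) (S : Finset α) : Finset α :=
  {v ∈ S | ∃ a, G.neighborSet v = {a}}

lemma mem_leaves : v ∈ leaves G S ↔ v ∈ S ∧ ∃ a, G.neighborSet v = {a} := by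
  simp [leaves]

lemma Walk.IsPath.length_lt_card (hG : G.support ⊆ S) (hu : u ∈ S) {p : G.Walk u v}
    (hp : p.IsPath) : p.length < #S := by
  classical
  by_cases hnil : p.Nil
  · rw [hnil.length_eq_zero]
    exact card_pos.mpr ⟨u, hu⟩
  have hsub : p.support.toFinset ⊆ S := fun x hx =>
    hG (mem_support_of_mem_walk_support p hnil (List.mem_toFinset.mp hx))
  have := card_le_card hsub
  rw [List.toFinset_card_of_nodup hp.support_nodup, Walk.length_support] at this
  omega

namespace IsTreeOn

lemma neighborSet_nonempty (hT : G.IsTreeOn S) (hS : 2 ≤ #S) (hu : u ∈ S) :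
    (G.neighborSet u).Nonempty := by
  obtain ⟨v, hv, hvu⟩ := exists_mem_ne hS u
  obtain ⟨p⟩ := hT.reachable hu hv
  exact ⟨p.snd, p.adj_snd (Walk.not_nil_of_ne hvu.symm)⟩

/-- The far end of a longest path is a leaf: acyclicity forces each of its neighbours to be the
penultimate vertex, since any other neighbour would either close a cycle or extend the path. -/
lemma leaves_nonempty (hT : G.IsTreeOn S) (hS : 2 ≤ #S) : (leaves G S).Nonempty := by
  classical
  obtain ⟨u, hu⟩ := card_pos.mp (by omega : 0 < #S)
  obtain ⟨w, hw, hwu⟩ := exists_mem_ne hS u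
  let lengths : Set ℕ := {k | ∃ v, ∃ p : G.Walk u v, p.IsPath ∧ p.length = k}
  obtain ⟨q⟩ := hT.reachable hu hw
  have hbdd : BddAbove lengths :=
    ⟨#S, by rintro _ ⟨v, p, hp, rfl⟩; exact (hp.length_lt_card hT.support_subset hu).le⟩
  obtain ⟨v, p, hp, hlen⟩ := Nat.sSup_mem (⟨_, w, _, q.toPath.2, rfl⟩ : lengths.Nonempty) hbdd
  have hmax : ∀ x (r : G.Walk u x), r.IsPath → r.length ≤ p.length := fun x r hr =>
    hlen ▸ le_csSup hbdd ⟨x, r, hr, rfl⟩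
  have hnil : ¬ p.Nil := by
    have := hmax w _ q.toPath.2
    have := (Walk.not_nil_of_ne hwu.symm : ¬ q.toPath.1.Nil)
    rw [← Walk.length_eq_zero_iff] at *
    omega
  refine ⟨v, mem_leaves.mpr ⟨hT.support_subset ⟨_, (p.adj_penultimate hnil).symm⟩,
    p.penultimate, ?_⟩⟩
  ext x
  simp only [mem_neighborSet, Set.mem_singleton_iff]
  refine ⟨fun hx => ?_, fun hx => hx ▸ (p.adj_penultimate hnil).symm⟩
  by_cases hxp : x ∈ p.support
  · exact hT.isAcyclic.eq_penultimate_of_adj_end hp hx hxp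
  · have := hmax x _ (hp.concat hxp hx)
    simp only [Walk.length_concat] at this
    omega

end IsTreeOn

lemma neighborSet_sup_edge_of_ne (hvl : v ≠ l) (hva : v ≠ a) :
    (G ⊔ edge l a).neighborSet v = G.neighborSet v := by
  ext x
  simp [edge_adj, hvl, hva]

lemma neighborSet_sup_edge_left (hl : l ∉ G.support) (hla : l ≠ a) :
    (G ⊔ edge l a).neighborSet l = {a} := by
  ext x
  simp only [neighborSet_sup, Set.mem_union, mem_neighborSet, edge_adj, Set.mem_singleton_iff]
  have : ¬ G.Adj l x := fun h => hl ⟨x, h⟩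
  aesop

lemma neighborSet_sup_edge_right (hla : l ≠ a) :
    (G ⊔ edge l a).neighborSet a = insert l (G.neighborSet a) := by
  ext x
  simp only [neighborSet_sup, Set.mem_union, mem_neighborSet, edge_adj, Set.mem_insert_iff]
  aesop

lemma deleteIncidenceSet_sup_edge (hl : l ∉ G.support) :
    (G ⊔ edge l a).deleteIncidenceSet l = G := by
  ext x y
  simp only [deleteIncidenceSet_adj, sup_adj, edge_adj]
  have : G.Adj x y → x ≠ l ∧ y ≠ l := fun h =>
    ⟨fun hx => hl ⟨y, hx ▸ h⟩, fun hy => hl ⟨x, hy ▸ h.symm⟩⟩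
  aesop

lemma deleteIncidenceSet_sup_edge_of_neighborSet_eq (hN : G.neighborSet l = {a}) :
    G.deleteIncidenceSet l ⊔ edge l a = G := by
  have hN' : ∀ x, G.Adj l x ↔ x = a := fun x => Set.ext_iff.mp hN x
  have hla : G.Adj l a := (hN' a).mpr rfl
  ext x y
  simp only [deleteIncidenceSet_adj, sup_adj, edge_adj]
  constructor
  · rintro (⟨h, -, -⟩ | ⟨⟨rfl, rfl⟩ | ⟨rfl, rfl⟩, -⟩)
    exacts [h, hla, hla.symm]
  · intro h
    by_cases hx : x = l
    · subst hx
      exact Or.inr ⟨Or.inl ⟨rfl, (hN' y).mp h⟩, h.ne⟩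
    by_cases hy : y = l
    · subst hy
      exact Or.inr ⟨Or.inr ⟨(hN' x).mp h.symm, rfl⟩, h.ne⟩
    exact Or.inl ⟨h, hx, hy⟩

/-- A path from `u` to the leaf `l` passes through its neighbour `a`, so by acyclicity the path
from `u` to `a` avoids `l`. -/
lemma IsAcyclic.reachable_deleteIncidenceSet (hG : G.IsAcyclic) (hN : G.neighborSet l = {a})
    (hul : u ≠ l) (hu : G.Reachable u l) : (G.deleteIncidenceSet l).Reachable u a := by
  classical
  have hla : G.Adj l a := (Set.ext_iff.mp hN a).mpr rfl
  obtain ⟨r, hr⟩ := hu.some.toPath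
  have hnil : ¬ r.Nil := Walk.not_nil_of_ne hul
  have ha : a ∈ r.support := by
    have : r.penultimate = a := (Set.ext_iff.mp hN _).mp (r.adj_penultimate hnil).symm
    exact this ▸ r.getVert_mem_support _
  obtain ⟨q, hq⟩ := (hu.trans hla.reachable).some.toPath
  have hlq : l ∉ q.support := hG.ne_mem_support_of_support_of_adj_of_isPath hr hq hla ha
  exact ⟨q.toDeleteEdges _ fun e he hinc => hlq (Walk.mem_support_of_mem_edges he hinc.2)⟩

section DecidableEq

variable [DecidableEq α]

namespace IsTreeOn

lemma sup_edge (hT : G.IsTreeOn S) (hl : l ∉ S) (ha : a ∈ S) :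
    (G ⊔ edge l a).IsTreeOn (insert l S) where
  support_subset := by
    rintro x ⟨y, hxy | hxy⟩
    · exact mem_insert_of_mem (hT.support_subset ⟨y, hxy⟩)
    · rcases (edge_adj _ _ _ _).mp hxy with ⟨⟨rfl, -⟩ | ⟨rfl, -⟩, -⟩
      exacts [mem_insert_self _ _, mem_insert_of_mem ha]
  reachable := by
    have hla : (G ⊔ edge l a).Adj l a :=
      Or.inr ((edge_adj _ _ _ _).mpr ⟨Or.inl ⟨rfl, rfl⟩, fun h => hl (h ▸ ha)⟩)
    have key : ∀ x ∈ insert l S, (G ⊔ edge l a).Reachable x a := by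
      intro x hx
      rcases mem_insert.mp hx with rfl | hx
      · exact hla.reachable
      · exact (hT.reachable hx ha).mono le_sup_left
    exact fun x hx y hy => (key x hx).trans (key y hy).symm
  isAcyclic := hT.isAcyclic.sup_edge_of_not_reachable fun h =>
    hl (hT.support_subset (mem_support_of_reachable (fun e => hl (e ▸ ha)) h))

lemma leaves_sup_edge (hT : G.IsTreeOn S) (hS : 2 ≤ #S) (hl : l ∉ S) (ha : a ∈ S) :
    leaves (G ⊔ edge l a) (insert l S) = insert l ((leaves G S).erase a) := by
  have hla : l ≠ a := fun h => hl (h ▸ ha)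
  have hlG : l ∉ G.support := fun h => hl (hT.support_subset h)
  ext v
  simp only [mem_leaves, mem_insert, mem_erase]
  by_cases hvl : v = l
  · subst hvl
    simp [neighborSet_sup_edge_left hlG hla]
  by_cases hva : v = a
  · subst hva
    obtain ⟨x, hx⟩ := hT.neighborSet_nonempty hS ha
    have hxl : x ≠ l := fun h => hl (hT.support_subset ⟨v, h ▸ hx.symm⟩)
    refine iff_of_false ?_ (by simp [hvl])
    rintro ⟨-, b, hb⟩
    rw [neighborSet_sup_edge_right hla] at hb
    have h1 := hb ▸ Set.mem_insert l _
    have h2 := hb ▸ Set.mem_insert_of_mem l hx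
    exact hxl ((Set.mem_singleton_iff.mp h2).trans (Set.mem_singleton_iff.mp h1).symm)
  simp [hvl, hva, neighborSet_sup_edge_of_ne hvl hva]

lemma deleteIncidenceSet (hT : G.IsTreeOn S) (hN : G.neighborSet l = {a}) :
    (G.deleteIncidenceSet l).IsTreeOn (S.erase l) where
  support_subset := by
    rintro x ⟨y, hxy : (G.deleteIncidenceSet l).Adj x y⟩
    rw [deleteIncidenceSet_adj] at hxy
    exact mem_erase.mpr ⟨hxy.2.1, hT.support_subset ⟨y, hxy.1⟩⟩
  reachable := by
    have hlS : l ∈ S := hT.support_subset ⟨a, (Set.ext_iff.mp hN a).mpr rfl⟩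
    have key : ∀ x ∈ S.erase l, (G.deleteIncidenceSet l).Reachable x a := fun x hx =>
      IsAcyclic.reachable_deleteIncidenceSet hT.isAcyclic hN (ne_of_mem_erase hx)
        (hT.reachable (mem_of_mem_erase hx) hlS)
    exact fun x hx y hy => (key x hx).trans (key y hy).symm
  isAcyclic := hT.isAcyclic.anti (G.deleteIncidenceSet_le l)

lemma eq_edge (hT : G.IsTreeOn {u, v}) (huv : u ≠ v) : G = edge u v := by
  have hmem : ∀ {x y}, G.Adj x y → x = u ∨ x = v := fun h => by
    simpa using hT.support_subset ⟨_, h⟩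
  obtain ⟨x, hx⟩ := hT.neighborSet_nonempty (by simp [card_pair huv]) (mem_insert_self u {v})
  have hadj : G.Adj u v := by
    have hx : G.Adj u x := hx
    rcases hmem hx.symm with rfl | rfl
    exacts [absurd hx (G.loopless.irrefl _), hx]
  ext x y
  rw [edge_adj]
  refine ⟨fun h => ⟨?_, h.ne⟩, ?_⟩
  · rcases hmem h with rfl | rfl <;> rcases hmem h.symm with rfl | rfl <;> simp_all
  · rintro ⟨⟨rfl, rfl⟩ | ⟨rfl, rfl⟩, -⟩
    exacts [hadj, hadj.symm]

end IsTreeOn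

lemma isTreeOn_edge (huv : u ≠ v) : (edge u v).IsTreeOn {u, v} := by
  have hbot : (⊥ : SimpleGraph α).IsTreeOn {v} :=
    ⟨by simp, fun x hx y hy => by simp_all, isAcyclic_bot⟩
  simpa using hbot.sup_edge (by simpa using huv) (mem_singleton_self v)

lemma leaves_edge (huv : u ≠ v) : leaves (edge u v) {u, v} = {u, v} := by
  ext x
  simp only [mem_leaves, and_iff_left_iff_imp, mem_insert, mem_singleton]
  rintro (rfl | rfl)
  exacts [⟨v, by ext; simp [edge_adj]; grind⟩, ⟨u, by ext; simp [edge_adj]; grind⟩]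

lemma fromEdgeSet_sym2_pair : fromEdgeSet ({u, v} : Finset α).sym2 = edge u v := by
  ext x y
  simp only [fromEdgeSet_adj, mem_coe, mk_mem_sym2_iff, mem_insert, mem_singleton, edge_adj]
  aesop

end DecidableEq

section LinearOrder

variable [LinearOrder α] {s t : List α}

/-- On codes of length `#S - 2` the base case is a single edge and the `⊥` branch is never
reached. -/
noncomputable def pruferDecode : Finset α → List α → SimpleGraph α
  | S, [] => fromEdgeSet S.sym2
  | S, a :: s =>
    if h : (S \ (a :: s).toFinset).Nonempty then
      pruferDecode (S.erase ((S \ (a :: s).toFinset).min' h)) s ⊔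
        edge ((S \ (a :: s).toFinset).min' h) a
    else ⊥

def IsPruferCode (S : Finset α) (s : List α) : Prop :=
  s.length + 2 = #S ∧ ∀ x ∈ s, x ∈ S

lemma pruferDecode_cons {T : Finset α} (hT : S \ (a :: s).toFinset = T) (h : T.Nonempty) :
    pruferDecode S (a :: s) = pruferDecode (S.erase (T.min' h)) s ⊔ edge (T.min' h) a := by
  subst hT
  exact dif_pos h

namespace IsPruferCode

lemma sdiff_nonempty (h : IsPruferCode S s) : (S \ s.toFinset).Nonempty := by
  rw [← card_pos]
  have := le_card_sdiff s.toFinset S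
  have := s.toFinset_card_le
  have := h.1
  omega

lemma erase (h : IsPruferCode S (a :: s)) (hl : l ∈ S \ (a :: s).toFinset) :
    IsPruferCode (S.erase l) s ∧ a ∈ S.erase l := by
  simp only [mem_sdiff, List.mem_toFinset, List.mem_cons, not_or] at hl
  refine ⟨⟨?_, fun x hx => mem_erase.mpr ⟨?_, h.2 x (.tail a hx)⟩⟩,
    mem_erase.mpr ⟨Ne.symm hl.2.1, h.2 a (.head s)⟩⟩
  · rw [card_erase_of_mem hl.1, ← h.1, List.length_cons]
    omega
  · rintro rfl
    exact hl.2.2 hx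

theorem isTreeOn_pruferDecode (h : IsPruferCode S s) :
    (pruferDecode S s).IsTreeOn S ∧ leaves (pruferDecode S s) S = S \ s.toFinset := by
  induction s generalizing S with
  | nil =>
    obtain ⟨u, v, huv, rfl⟩ := card_eq_two.mp h.1.symm
    rw [pruferDecode, fromEdgeSet_sym2_pair]
    exact ⟨isTreeOn_edge huv, by simp [leaves_edge huv]⟩
  | cons a s ih =>
    have hne := h.sdiff_nonempty
    set l := (S \ (a :: s).toFinset).min' hne
    have hl : l ∈ S \ (a :: s).toFinset := min'_mem _ hne
    have hlS : l ∈ S := (mem_sdiff.mp hl).1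
    obtain ⟨h', ha⟩ := h.erase hl
    obtain ⟨hT, hL⟩ := ih h'
    rw [pruferDecode_cons rfl hne]
    have hS : 2 ≤ #(S.erase l) := by rw [← h'.1]; omega
    have htree := hT.sup_edge (notMem_erase l S) ha
    have hleaves := hT.leaves_sup_edge hS (notMem_erase l S) ha
    rw [insert_erase hlS] at htree hleaves
    refine ⟨htree, ?_⟩
    rw [hleaves, hL, List.toFinset_cons]
    exact insert_erase_sdiff_erase hlS (by simpa using (mem_sdiff.mp hl).2)

end IsPruferCode

theorem injOn_pruferDecode : Set.InjOn (pruferDecode S) {s | IsPruferCode S s} := by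
  intro s hs t ht heq
  induction s generalizing S t with
  | nil =>
    have h1 : 2 = #S := hs.1
    have h2 := ht.1
    exact (List.length_eq_zero_iff.mp (by omega)).symm
  | cons a s ih =>
    obtain _ | ⟨b, t⟩ := t
    · have := hs.1; have := ht.1; simp_all
    have hst : S \ (a :: s).toFinset = S \ (b :: t).toFinset := by
      rw [← hs.isTreeOn_pruferDecode.2, ← ht.isTreeOn_pruferDecode.2, heq]
    have hne := ht.sdiff_nonempty
    set l := (S \ (b :: t).toFinset).min' hne
    have hl : l ∈ S \ (b :: t).toFinset := min'_mem _ hne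
    obtain ⟨hs', -⟩ := hs.erase (hst ▸ hl)
    obtain ⟨ht', -⟩ := ht.erase hl
    have hlG : ∀ {u : List α}, IsPruferCode (S.erase l) u →
        l ∉ (pruferDecode (S.erase l) u).support := fun hu hmem =>
      notMem_erase l S (hu.isTreeOn_pruferDecode.1.support_subset hmem)
    rw [pruferDecode_cons hst hne, pruferDecode_cons rfl hne] at heq
    have hla : l ≠ a := by
      have := (mem_sdiff.mp (hst ▸ hl : l ∈ S \ (a :: s).toFinset)).2
      simp_all
    have hlb : l ≠ b := by
      have := (mem_sdiff.mp hl).2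
      simp_all
    have hab : a = b := by
      have := congrArg (neighborSet · l) heq
      rwa [neighborSet_sup_edge_left (hlG hs') hla, neighborSet_sup_edge_left (hlG ht') hlb,
        Set.singleton_eq_singleton_iff] at this
    subst hab
    have := congrArg (deleteIncidenceSet · l) heq
    rw [deleteIncidenceSet_sup_edge (hlG hs'), deleteIncidenceSet_sup_edge (hlG ht')] at this
    rw [ih hs' ht' this]

theorem IsTreeOn.exists_pruferDecode_eq (hT : G.IsTreeOn S) (hS : 2 ≤ #S) :
    ∃ s, IsPruferCode S s ∧ pruferDecode S s = G := by
  obtain ⟨k, hk⟩ := Nat.exists_eq_add_of_le' hS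
  induction k generalizing S G with
  | zero =>
    obtain ⟨u, v, huv, rfl⟩ := card_eq_two.mp hk
    exact ⟨[], ⟨by simp [card_pair huv], by simp⟩,
      by rw [pruferDecode, fromEdgeSet_sym2_pair, hT.eq_edge huv]⟩
  | succ k ih =>
    have hL := hT.leaves_nonempty hS
    obtain ⟨l, hl⟩ : ∃ l, (leaves G S).min' hL = l := ⟨_, rfl⟩
    obtain ⟨hlS, a, hN⟩ := mem_leaves.mp (hl ▸ min'_mem _ hL)
    have hla : G.Adj l a := (Set.ext_iff.mp hN a).mpr rfl
    have hT' := hT.deleteIncidenceSet hN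
    have hk' : #(S.erase l) = k + 2 := by rw [card_erase_of_mem hlS]; omega
    obtain ⟨s, hs, hdec⟩ := ih hT' (by omega) hk'
    have hsS : ∀ x ∈ s, x ∈ S := fun x hx => mem_of_mem_erase (hs.2 x hx)
    have hls : l ∉ insert a s.toFinset := by
      simpa [not_or] using ⟨hla.ne, fun h => notMem_erase l S (hs.2 l h)⟩
    have hGS : G = pruferDecode (S.erase l) s ⊔ edge l a := by
      rw [hdec, deleteIncidenceSet_sup_edge_of_neighborSet_eq hN]
    have hleaves : S \ (a :: s).toFinset = leaves G S := by
      have := hdec ▸ hT'.leaves_sup_edge (by omega) (notMem_erase l S)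
        (mem_erase.mpr ⟨hla.ne', hT.support_subset ⟨l, hla.symm⟩⟩)
      rw [insert_erase hlS, ← hGS, hs.isTreeOn_pruferDecode.2,
        insert_erase_sdiff_erase hlS hls] at this
      rw [List.toFinset_cons, this]
    refine ⟨a :: s, ⟨by have := hs.1; simp only [List.length_cons]; omega, ?_⟩, ?_⟩
    · simpa using ⟨hT.support_subset ⟨l, hla.symm⟩, hsS⟩
    · rw [pruferDecode_cons hleaves hL, hl, hGS]

theorem card_isTreeOn (hS : 2 ≤ #S) :
    Nat.card {G : SimpleGraph α // G.IsTreeOn S} = #S ^ (#S - 2) := by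
  let decode : {s // IsPruferCode S s} → {G : SimpleGraph α // G.IsTreeOn S} :=
    fun s => ⟨pruferDecode S s, s.2.isTreeOn_pruferDecode.1⟩
  have hdecode : decode.Bijective := by
    refine ⟨fun s t h => Subtype.ext (injOn_pruferDecode s.2 t.2 (congrArg Subtype.val h)), ?_⟩
    intro G
    obtain ⟨s, hs, hG⟩ := G.2.exists_pruferDecode_eq hS
    exact ⟨⟨s, hs⟩, Subtype.ext hG⟩
  have hcodes : {s // IsPruferCode S s} ≃ {s : List α // s.length = #S - 2 ∧ ∀ x ∈ s, x ∈ S} :=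
    Equiv.subtypeEquivRight fun s => and_congr_left' (by omega)
  rw [← Nat.card_congr (Equiv.ofBijective decode hdecode), Nat.card_congr hcodes,
    Nat.card_list_length_eq_forall_mem]

end LinearOrder

lemma isTreeOn_univ_iff [Fintype α] [Nonempty α] : G.IsTreeOn univ ↔ G.IsTree :=
  ⟨fun hT => ⟨(connected_iff G).mpr ⟨fun u v => hT.reachable (mem_univ u) (mem_univ v), ‹_›⟩,
      hT.isAcyclic⟩,
    fun hG => ⟨by simp, fun u _ v _ => hG.connected.preconnected u v, hG.isAcyclic⟩⟩

end SimpleGraph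

/-- Cayley's formula: the number of spanning trees of the complete graph on
`n ≥ 2` vertices equals `n ^ (n - 2)`. -/
theorem cayley_formula (n : ℕ) (hn : 2 ≤ n) :
    Nat.card {H : SimpleGraph (Fin n) // H ≤ (⊤ : SimpleGraph (Fin n)) ∧ H.IsTree} =
      n ^ (n - 2) := by
  have : Nonempty (Fin n) := ⟨⟨0, by omega⟩⟩
  have e : {H : SimpleGraph (Fin n) // H ≤ ⊤ ∧ H.IsTree} ≃
      {H : SimpleGraph (Fin n) // H.IsTreeOn univ} :=
    Equiv.subtypeEquivRight fun H => by rw [SimpleGraph.isTreeOn_univ_iff, and_iff_right le_top]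
  rw [Nat.card_congr e, SimpleGraph.card_isTreeOn (by simpa using hn), card_univ, Fintype.card_fin]
end

section
/- Cayley's formula for bipartite graphs: the number of spanning trees of the complete bipartite graph K_{n,m} with parts of sizes n ≥ 1 and m ≥ 1 equals n^{m−1} · m^{n−1}. -/
/-!
A spanning tree of `K` rooted at `r` is the same as a parent map `p`: `p r = r`, each `v ≠ r` is
joined in `K` to `p v`, and iterating `p` leads every vertex to `r`.

Joyal's argument counts the pairs `f : α → β`, `g : β → α` a second way. Twisting `f` by a
permutation of the periodic points of `h = g ∘ f` turns `g ∘ f` into a map with a single cycle,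
through a point `x` determined by `h`; the twist can be read back off the result, since it is
built from an enumeration of the periodic points that depends only on their set, which twisting
preserves. The map of `α ⊕ β` sending `a` to `f a` and `b` to `g b` then has its only cycle
through `inl x`, and cutting its edge out of `inl x` leaves a parent map rooted at `inl x`
together with a neighbour of `inl x`. Hence `m ^ n * n ^ m = n * m * T`, where `T` counts the
spanning trees of `K_{n,m}`.
-/

open Function Set

namespace Function

variable {α : Type*} {f g : α → α} {s : Set α} {x : α}

lemma exists_iterate_mem_periodicPts [Finite α] (f : α → α) (a : α) :
    ∃ n, f^[n] a ∈ periodicPts f := by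
  obtain ⟨m, n, hne, h⟩ := Finite.exists_ne_map_eq_of_infinite (f^[·] a)
  wlog hlt : m < n generalizing m n
  · exact this n m hne.symm h.symm (by omega)
  refine ⟨m, mk_mem_periodicPts (n := n - m) (by omega) ?_⟩
  rw [IsPeriodicPt, IsFixedPt, ← iterate_add_apply, Nat.sub_add_cancel hlt.le]
  exact h.symm

lemma exists_iterate_mem_of_eqOn_compl (hfg : EqOn f g sᶜ) {a : α} (h : ∃ n, f^[n] a ∈ s) :
    ∃ n, g^[n] a ∈ s := by
  obtain ⟨n, hn⟩ := h
  induction n generalizing a with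
  | zero => exact ⟨0, hn⟩
  | succ n ih =>
    by_cases ha : a ∈ s
    · exact ⟨0, ha⟩
    obtain ⟨k, hk⟩ := ih (a := f a) hn
    exact ⟨k + 1, by rwa [iterate_succ_apply, ← hfg ha]⟩

lemma periodicPts_subset_of_mapsTo (hs : MapsTo f s s) (h : ∀ a, ∃ n, f^[n] a ∈ s) :
    periodicPts f ⊆ s := by
  rintro a ⟨m, hm, ha⟩
  obtain ⟨n, hn⟩ := h a
  rw [← (ha.mul_const n).eq, ← Nat.sub_add_cancel (Nat.le_mul_of_pos_left n hm),
    iterate_add_apply]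
  exact hs.iterate _ hn

lemma subset_periodicPts_of_injOn (hs : s.Finite) (hmaps : MapsTo f s s) (hinj : InjOn f s) :
    s ⊆ periodicPts f := by
  have := hs.to_subtype
  intro a ha
  obtain ⟨n, hn, h⟩ := (hmaps.restrict_inj.mpr hinj).mem_periodicPts ⟨a, ha⟩
  refine mk_mem_periodicPts hn ?_
  simpa [IsPeriodicPt, IsFixedPt, hmaps.iterate_restrict] using congrArg Subtype.val h

lemma periodicPts_eq_of_eqOn_compl (hs : s.Finite) (hreach : ∀ a, ∃ n, f^[n] a ∈ s)
    (hfg : EqOn f g sᶜ) (hmaps : MapsTo g s s) (hinj : InjOn g s) : periodicPts g = s :=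
  (periodicPts_subset_of_mapsTo hmaps fun a ↦ exists_iterate_mem_of_eqOn_compl hfg (hreach a))
    |>.antisymm (subset_periodicPts_of_injOn hs hmaps hinj)

lemma mem_periodicPts_of_forall_exists_iterate_eq (hx : ∀ a, ∃ n, f^[n] a = x) :
    x ∈ periodicPts f := by
  obtain ⟨n, hn⟩ := hx (f x)
  exact mk_mem_periodicPts n.succ_pos (by rwa [IsPeriodicPt, IsFixedPt, iterate_succ_apply])

lemma periodicPts_eq_image_iterate (hx : ∀ a, ∃ n, f^[n] a = x) :
    periodicPts f = (f^[·] x) '' Iio (minimalPeriod f x) := by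
  have hxp := mem_periodicPts_of_forall_exists_iterate_eq hx
  have hpos := minimalPeriod_pos_of_mem_periodicPts hxp
  refine (periodicPts_subset_of_mapsTo ?_ fun a ↦ ?_).antisymm ?_
  · rintro - ⟨n, -, rfl⟩
    refine ⟨(n + 1) % minimalPeriod f x, mem_Iio.mpr (Nat.mod_lt _ hpos), ?_⟩
    simp only [iterate_mod_minimalPeriod_eq, iterate_succ_apply']
  · obtain ⟨n, hn⟩ := hx a
    exact ⟨n, 0, hpos, hn.symm⟩
  · rintro - ⟨n, -, rfl⟩
    obtain ⟨m, hm, h⟩ := hxp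
    exact mk_mem_periodicPts hm (h.apply_iterate n)

lemma ncard_periodicPts_of_forall_exists_iterate_eq (hx : ∀ a, ∃ n, f^[n] a = x) :
    (periodicPts f).ncard = minimalPeriod f x := by
  rw [periodicPts_eq_image_iterate hx, iterate_injOn_Iio_minimalPeriod.ncard_image]
  simp

end Function

namespace Joyal

open scoped Classical

variable {α : Type*} [Fintype α]

section

variable (h : α → α)

noncomputable def cycleList : List α := (periodicPts h).toFinset.toList

noncomputable def cyclePerm : Equiv.Perm α := (cycleList h).formPerm

noncomputable def untwist (x a : α) : α :=
  if a ∈ periodicPts h then h^[(cycleList h).idxOf a] x else a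

variable [Nonempty α]

noncomputable def base : α := (cycleList h).headD (Classical.arbitrary α)

/-- On the periodic points, `h ∘ twist h` is the conjugate of the single cycle `cyclePerm h` by
`h ∘ (cyclePerm h)⁻¹`. -/
noncomputable def twist (b : α) : α :=
  if b ∈ periodicPts h then cyclePerm h (invFunOn h (periodicPts h) b) else b

noncomputable def root : α := h ((cyclePerm h).symm (base h))

end

variable {h h' : α → α} {a b x : α}

@[simp] lemma mem_cycleList : a ∈ cycleList h ↔ a ∈ periodicPts h := by simp [cycleList]

lemma nodup_cycleList : (cycleList h).Nodup := Finset.nodup_toList _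

lemma length_cycleList : (cycleList h).length = (periodicPts h).ncard := by
  simp [cycleList, ncard_eq_toFinset_card']

lemma cycleList_congr (e : periodicPts h = periodicPts h') : cycleList h = cycleList h' := by
  simp only [cycleList, e]

lemma cyclePerm_congr (e : periodicPts h = periodicPts h') : cyclePerm h = cyclePerm h' := by
  rw [cyclePerm, cycleList_congr e, cyclePerm]

@[simp] lemma cyclePerm_mem_iff : cyclePerm h a ∈ periodicPts h ↔ a ∈ periodicPts h := by
  simp [cyclePerm, ← mem_cycleList, List.formPerm_mem_iff_mem]

@[simp] lemma cyclePerm_symm_mem_iff :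
    (cyclePerm h).symm a ∈ periodicPts h ↔ a ∈ periodicPts h := by
  rw [← cyclePerm_mem_iff, Equiv.apply_symm_apply]

lemma cyclePerm_pow_mem (ha : a ∈ periodicPts h) (n : ℕ) :
    (cyclePerm h ^ n) a ∈ periodicPts h := by
  induction n with
  | zero => exact ha
  | succ n ih => rwa [pow_succ', Equiv.Perm.mul_apply, cyclePerm_mem_iff]

lemma cyclePerm_pow_getElem {i : ℕ} (hi : i < (cycleList h).length) (n : ℕ) :
    (cyclePerm h ^ n) (cycleList h)[i] =
      (cycleList h)[(i + n) % (cycleList h).length]'(Nat.mod_lt _ (by omega)) :=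
  List.formPerm_pow_apply_getElem _ nodup_cycleList n i hi

lemma exists_cyclePerm_pow_eq (ha : a ∈ periodicPts h) (hb : b ∈ periodicPts h) :
    ∃ n, (cyclePerm h ^ n) a = b := by
  rw [← mem_cycleList] at ha hb
  obtain ⟨i, hi, rfl⟩ := List.getElem_of_mem ha
  obtain ⟨j, hj, rfl⟩ := List.getElem_of_mem hb
  refine ⟨j + (cycleList h).length - i, ?_⟩
  rw [cyclePerm_pow_getElem hi]
  congr 1
  rw [show i + (j + (cycleList h).length - i) = j + (cycleList h).length by omega,
    Nat.add_mod_right, Nat.mod_eq_of_lt hj]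

lemma untwist_getElem {i : ℕ} (hi : i < (cycleList h).length) :
    untwist h x (cycleList h)[i] = h^[i] x := by
  rw [untwist, if_pos (mem_cycleList.mp (List.getElem_mem hi)), nodup_cycleList.idxOf_getElem]

lemma untwist_of_notMem (ha : a ∉ periodicPts h) : untwist h x a = a := if_neg ha

lemma length_cycleList_eq_minimalPeriod (hx : ∀ a, ∃ n, h^[n] a = x) :
    (cycleList h).length = minimalPeriod h x := by
  rw [length_cycleList, ncard_periodicPts_of_forall_exists_iterate_eq hx]

lemma untwist_mem (hx : ∀ a, ∃ n, h^[n] a = x) (ha : a ∈ periodicPts h) :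
    untwist h x a ∈ periodicPts h := by
  obtain ⟨m, hm, hper⟩ := mem_periodicPts_of_forall_exists_iterate_eq hx
  rw [untwist, if_pos ha]
  exact mk_mem_periodicPts hm (hper.apply_iterate _)

lemma injOn_untwist (hx : ∀ a, ∃ n, h^[n] a = x) : InjOn (untwist h x) (periodicPts h) := by
  intro a ha b hb e
  obtain ⟨i, hi, rfl⟩ := List.getElem_of_mem (mem_cycleList.mpr ha)
  obtain ⟨j, hj, rfl⟩ := List.getElem_of_mem (mem_cycleList.mpr hb)
  rw [untwist_getElem, untwist_getElem] at e
  rw [length_cycleList_eq_minimalPeriod hx] at hi hj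
  obtain rfl : i = j := iterate_injOn_Iio_minimalPeriod hi hj e
  rfl

lemma untwist_cyclePerm (hx : ∀ a, ∃ n, h^[n] a = x) (ha : a ∈ periodicPts h) :
    untwist h x (cyclePerm h a) = h (untwist h x a) := by
  obtain ⟨i, hi, rfl⟩ := List.getElem_of_mem (mem_cycleList.mpr ha)
  rw [← pow_one (cyclePerm h), cyclePerm_pow_getElem hi, untwist_getElem, untwist_getElem,
    length_cycleList_eq_minimalPeriod hx, iterate_mod_minimalPeriod_eq, iterate_succ_apply']

lemma periodicPts_comp_untwist (hx : ∀ a, ∃ n, h^[n] a = x) :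
    periodicPts (h ∘ untwist h x) = periodicPts h := by
  have hmaps : MapsTo (untwist h x) (periodicPts h) (periodicPts h) := fun _ ↦ untwist_mem hx
  refine periodicPts_eq_of_eqOn_compl (f := h) (toFinite _) (fun a ↦ ?_)
    (fun b hb ↦ by simp [untwist_of_notMem hb]) ((bijOn_periodicPts h).mapsTo.comp hmaps)
    ((bijOn_periodicPts h).injOn.comp (injOn_untwist hx) hmaps)
  obtain ⟨n, hn⟩ := hx a
  exact ⟨n, hn ▸ mem_periodicPts_of_forall_exists_iterate_eq hx⟩

variable [Nonempty α]

lemma periodicPts_nonempty : (periodicPts h).Nonempty :=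
  let ⟨_, hn⟩ := exists_iterate_mem_periodicPts h (Classical.arbitrary α)
  ⟨_, hn⟩

lemma length_cycleList_pos : 0 < (cycleList h).length := by
  rw [length_cycleList]
  exact periodicPts_nonempty.ncard_pos (toFinite _)

lemma base_eq_getElem : base h = (cycleList h)[0]'length_cycleList_pos := by
  rw [base, List.headD_eq_head?_getD, List.head?_eq_getElem?,
    List.getElem?_eq_getElem length_cycleList_pos]
  rfl

lemma base_congr (e : periodicPts h = periodicPts h') : base h = base h' := by
  rw [base, cycleList_congr e, base]

lemma base_mem : base h ∈ periodicPts h := by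
  rw [base_eq_getElem, ← mem_cycleList]
  exact List.getElem_mem _

lemma twist_of_notMem (hb : b ∉ periodicPts h) : twist h b = b := if_neg hb

lemma twist_apply_self (ha : a ∈ periodicPts h) : twist h (h a) = cyclePerm h a := by
  rw [twist, if_pos ((bijOn_periodicPts h).mapsTo ha), (bijOn_periodicPts h).invOn_invFunOn.1 ha]

lemma twist_mem (hb : b ∈ periodicPts h) : twist h b ∈ periodicPts h := by
  rw [twist, if_pos hb, cyclePerm_mem_iff]
  exact invFunOn_mem ((bijOn_periodicPts h).surjOn hb)

lemma apply_cyclePerm_symm_twist (hb : b ∈ periodicPts h) :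
    h ((cyclePerm h).symm (twist h b)) = b := by
  rw [twist, if_pos hb, Equiv.symm_apply_apply]
  exact invFunOn_eq ((bijOn_periodicPts h).surjOn hb)

lemma periodicPts_comp_twist : periodicPts (h ∘ twist h) = periodicPts h := by
  have hmaps : MapsTo (twist h) (periodicPts h) (periodicPts h) := fun _ ↦ twist_mem
  refine periodicPts_eq_of_eqOn_compl (toFinite _) (exists_iterate_mem_periodicPts h)
    (fun b hb ↦ by simp [twist_of_notMem hb]) ((bijOn_periodicPts h).mapsTo.comp hmaps)
    ((bijOn_periodicPts h).injOn.comp (fun b hb c hc e ↦ ?_) hmaps)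
  rw [← apply_cyclePerm_symm_twist hb, ← apply_cyclePerm_symm_twist hc, e]

lemma iterate_comp_twist_apply (ha : a ∈ periodicPts h) (n : ℕ) :
    (h ∘ twist h)^[n] (h a) = h ((cyclePerm h ^ n) a) := by
  induction n with
  | zero => rfl
  | succ n ih =>
    rw [iterate_succ_apply', ih, comp_apply, twist_apply_self (cyclePerm_pow_mem ha n),
      pow_succ', Equiv.Perm.mul_apply]

lemma exists_iterate_comp_twist_eq_root (a : α) : ∃ n, (h ∘ twist h)^[n] a = root h := by
  obtain ⟨m, hm⟩ := exists_iterate_mem_periodicPts (h ∘ twist h) a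
  rw [periodicPts_comp_twist] at hm
  generalize hc : (h ∘ twist h)^[m] a = c at hm
  have hc' := cyclePerm_symm_mem_iff.mpr (twist_mem hm)
  obtain ⟨n, hn⟩ := exists_cyclePerm_pow_eq hc' (cyclePerm_symm_mem_iff.mpr (base_mem (h := h)))
  refine ⟨n + m, ?_⟩
  rw [iterate_add_apply, hc, ← apply_cyclePerm_symm_twist hm, iterate_comp_twist_apply hc', hn,
    root]

lemma twist_untwist (a : α) : twist h (untwist (h ∘ twist h) (root h) a) = a := by
  rw [untwist, periodicPts_comp_twist, cycleList_congr periodicPts_comp_twist]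
  split_ifs with ha
  · have hbase := cyclePerm_symm_mem_iff.mpr (base_mem (h := h))
    have hi : (cycleList h).idxOf a < (cycleList h).length :=
      List.idxOf_lt_length_of_mem (mem_cycleList.mpr ha)
    rw [root, iterate_comp_twist_apply hbase, twist_apply_self (cyclePerm_pow_mem hbase _),
      ← Equiv.Perm.mul_apply, ← pow_succ', pow_succ, Equiv.Perm.mul_apply,
      Equiv.apply_symm_apply, base_eq_getElem, cyclePerm_pow_getElem]
    simp only [zero_add, Nat.mod_eq_of_lt hi, List.getElem_idxOf]
  · exact twist_of_notMem ha

lemma untwist_twist (hx : ∀ a, ∃ n, h^[n] a = x) (b : α) :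
    untwist h x (twist (h ∘ untwist h x) b) = b := by
  have hP := periodicPts_comp_untwist hx
  by_cases hb : b ∈ periodicPts h
  · rw [← hP] at hb
    have ht := twist_mem hb
    rw [hP] at ht
    have key := apply_cyclePerm_symm_twist hb
    rwa [cyclePerm_congr hP, comp_apply, ← untwist_cyclePerm hx (cyclePerm_symm_mem_iff.mpr ht),
      Equiv.apply_symm_apply] at key
  · rw [twist_of_notMem (hP ▸ hb), untwist_of_notMem hb]

lemma root_comp_untwist (hx : ∀ a, ∃ n, h^[n] a = x) : root (h ∘ untwist h x) = x := by
  have hP := periodicPts_comp_untwist hx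
  rw [root, cyclePerm_congr hP, base_congr hP, comp_apply,
    ← untwist_cyclePerm hx (cyclePerm_symm_mem_iff.mpr base_mem), Equiv.apply_symm_apply,
    base_eq_getElem, untwist_getElem, iterate_zero_apply]

noncomputable def equiv {β : Type*} (g : β → α) :
    (α → β) ≃ Σ x : α, {f : α → β // ∀ a, ∃ n, (g ∘ f)^[n] a = x} where
  toFun f := ⟨root (g ∘ f), f ∘ twist (g ∘ f), exists_iterate_comp_twist_eq_root (h := g ∘ f)⟩
  invFun p := p.2.1 ∘ untwist (g ∘ p.2.1) p.1
  left_inv f := funext fun a ↦ congrArg f (twist_untwist a)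
  right_inv := fun ⟨_, f, hf⟩ ↦ Sigma.subtype_ext (root_comp_untwist hf)
    (funext fun b ↦ congrArg f (untwist_twist hf b))

end Joyal

namespace SimpleGraph

variable {V : Type*}

structure IsParentMap (K : SimpleGraph V) (r : V) (p : V → V) : Prop where
  adj : ∀ v, v ≠ r → K.Adj v (p v)
  map_root : p r = r
  exists_iterate_eq_root : ∀ v, ∃ n, p^[n] v = r

def parentGraph (p : V → V) : SimpleGraph V := fromRel fun v w ↦ p v = w

@[simp]
lemma parentGraph_adj {p : V → V} {v w : V} :
    (parentGraph p).Adj v w ↔ v ≠ w ∧ (p v = w ∨ p w = v) :=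
  fromRel_adj ..

namespace IsParentMap

variable {K : SimpleGraph V} {r : V} {p q : V → V}

lemma eq_root_of_isPeriodicPt (hp : IsParentMap K r p) {n : ℕ} {v : V} (hn : 0 < n)
    (hv : IsPeriodicPt p n v) : v = r := by
  obtain ⟨k, hk⟩ := hp.exists_iterate_eq_root v
  rw [← (hv.mul_const k).eq, ← Nat.sub_add_cancel (Nat.le_mul_of_pos_left k hn),
    iterate_add_apply, hk, iterate_fixed hp.map_root]

lemma apply_ne (hp : IsParentMap K r p) {v : V} (hv : v ≠ r) : p v ≠ v :=
  fun h ↦ hv (hp.eq_root_of_isPeriodicPt one_pos h)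

lemma apply_apply_ne (hp : IsParentMap K r p) {v : V} (hv : p v ≠ v) : p (p v) ≠ v := by
  intro h
  obtain rfl := hp.eq_root_of_isPeriodicPt two_pos (show p (p v) = v from h)
  exact hv hp.map_root

lemma parentGraph_le (hp : IsParentMap K r p) : parentGraph p ≤ K := by
  rintro v w ⟨hvw, rfl | rfl⟩
  · exact hp.adj v fun h ↦ hvw (by rw [h, hp.map_root])
  · exact (hp.adj w fun h ↦ hvw (by rw [h, hp.map_root])).symm

lemma reachable_root (hp : IsParentMap K r p) (v : V) : (parentGraph p).Reachable v r := by
  obtain ⟨k, hk⟩ := hp.exists_iterate_eq_root v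
  induction k generalizing v with
  | zero => exact hk ▸ .rfl
  | succ k ih =>
    refine .trans ?_ (ih (p v) hk)
    by_cases hv : p v = v
    · rw [hv]
    · exact Adj.reachable (by simp [Ne.symm hv])

lemma connected (hp : IsParentMap K r p) : (parentGraph p).Connected :=
  have : Nonempty V := ⟨r⟩
  .mk fun v w ↦ (hp.reachable_root v).trans (hp.reachable_root w).symm

lemma card_edgeSet_add_one [Finite V] (hp : IsParentMap K r p) :
    Nat.card (parentGraph p).edgeSet + 1 = Nat.card V := by
  classical
  let e : {v // v ≠ r} → (parentGraph p).edgeSet :=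
    fun v ↦ ⟨s(v, p v), by simp [Ne.symm (hp.apply_ne v.2)]⟩
  have he : Bijective e := by
    refine ⟨fun v w h ↦ ?_, ?_⟩
    · simp only [e, Subtype.mk.injEq, Sym2.eq_iff] at h
      rcases h with ⟨h, -⟩ | ⟨h, h'⟩
      · exact Subtype.ext h
      · exact absurd (by rwa [← h]) (hp.apply_apply_ne (hp.apply_ne w.2))
    · rintro ⟨e, he⟩
      induction e using Sym2.ind with | _ v w => ?_
      obtain ⟨hvw, h | h⟩ := parentGraph_adj.mp he
      all_goals dsimp only at hvw h; subst h
      · exact ⟨⟨v, fun h ↦ hvw (by rw [h, hp.map_root])⟩, rfl⟩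
      · exact ⟨⟨w, fun h ↦ hvw (by rw [h, hp.map_root])⟩, Subtype.ext Sym2.eq_swap⟩
  rw [← Nat.card_eq_of_bijective e he, ← Finite.card_option,
    Nat.card_congr (Equiv.optionSubtypeNe r)]

lemma isTree [Finite V] (hp : IsParentMap K r p) : (parentGraph p).IsTree :=
  isTree_iff_connected_and_card.mpr ⟨hp.connected, hp.card_edgeSet_add_one⟩

/-- By induction along `q`: the edge from `v` to `q v` lies in `parentGraph p`, and it cannot be
the edge from `q v` to its `p`-parent, as then `v` would have period two under `q`. -/
lemma eq_of_parentGraph_eq (hp : IsParentMap K r p) (hq : IsParentMap K r q)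
    (h : parentGraph p = parentGraph q) : p = q := by
  funext v
  obtain ⟨k, hk⟩ := hq.exists_iterate_eq_root v
  induction k generalizing v with
  | zero =>
    rw [iterate_zero_apply] at hk
    rw [hk, hp.map_root, hq.map_root]
  | succ k ih =>
    by_cases hv : q v = v
    · rw [hq.eq_root_of_isPeriodicPt one_pos hv, hp.map_root, hq.map_root]
    have hadj : (parentGraph p).Adj v (q v) := h ▸ (by simp [Ne.symm hv])
    rcases (parentGraph_adj.mp hadj).2 with hpv | hpq
    · exact hpv
    · rw [ih (q v) hk] at hpq
      exact absurd hpq (hq.apply_apply_ne hv)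

end IsParentMap

lemma IsTree.exists_isParentMap [Finite V] {K H : SimpleGraph V} (hH : H.IsTree) (hHK : H ≤ K)
    (r : V) : ∃ p, IsParentMap K r p ∧ parentGraph p = H := by
  have hstep : ∀ v, v ≠ r → ∃ w, H.Adj v w ∧ H.dist w r < H.dist v r := by
    intro v hv
    obtain ⟨c, hc⟩ := hH.connected.exists_walk_length_eq_dist v r
    cases c with
    | nil => exact absurd rfl hv
    | cons hadj c => exact ⟨_, hadj, (dist_le c).trans_lt (by simp [← hc])⟩
  choose! par hpar using hstep
  classical
  let p v := if v = r then r else par v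
  have hpH : ∀ v, v ≠ r → H.Adj v (p v) := fun v hv ↦ by simpa [p, hv] using (hpar v hv).1
  have hp : IsParentMap K r p := by
    refine ⟨fun v hv ↦ hHK (hpH v hv), by simp [p], fun v ↦ ?_⟩
    induction hd : H.dist v r using Nat.strong_induction_on generalizing v with
    | _ d ih =>
      by_cases hv : v = r
      · exact ⟨0, hv⟩
      obtain ⟨k, hk⟩ := ih _ (hd ▸ by simpa [p, hv] using (hpar v hv).2) (p v) rfl
      exact ⟨k + 1, hk⟩
  have hle : parentGraph p ≤ H := by
    rintro v w ⟨hvw, rfl | rfl⟩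
    · exact hpH v fun h ↦ hvw (by rw [h, hp.map_root])
    · exact (hpH w fun h ↦ hvw (by rw [h, hp.map_root])).symm
  have : Nonempty V := ⟨r⟩
  exact ⟨p, hp, hle.antisymm ((maximal_isAcyclic_iff_isTree.mpr hp.isTree).2 hH.isAcyclic hle)⟩

theorem card_isParentMap [Finite V] (K : SimpleGraph V) (r : V) :
    Nat.card {p // IsParentMap K r p} = Nat.card {H // H ≤ K ∧ H.IsTree} := by
  refine Nat.card_eq_of_bijective (fun p ↦ ⟨parentGraph p.1, p.2.parentGraph_le, p.2.isTree⟩)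
    ⟨fun p q h ↦ Subtype.ext (p.2.eq_of_parentGraph_eq q.2 (congrArg Subtype.val h)), ?_⟩
  rintro ⟨H, hHK, hH⟩
  obtain ⟨p, hp, rfl⟩ := hH.exists_isParentMap hHK r
  exact ⟨⟨p, hp⟩, rfl⟩

def equivAdjProdIsParentMap [DecidableEq V] (K : SimpleGraph V) (y : V) :
    {F : V → V // (∀ v, K.Adj v (F v)) ∧ ∀ v, ∃ n, F^[n] v = y} ≃
      {x // K.Adj y x} × {p // IsParentMap K y p} where
  toFun F := (⟨F.1 y, F.2.1 y⟩, ⟨update F.1 y y, fun v hv ↦ by simpa [hv] using F.2.1 v,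
    update_self .., fun v ↦ by
      simpa using exists_iterate_mem_of_eqOn_compl (s := {y}) (f := F.1)
        (fun w hw ↦ (update_of_ne hw ..).symm) (by simpa using F.2.2 v)⟩)
  invFun xp := ⟨update xp.2.1 y xp.1.1, fun v ↦ by
      rcases eq_or_ne v y with rfl | hv
      · simpa using xp.1.2
      · simpa [hv] using xp.2.2.adj v hv, fun v ↦ by
      simpa using exists_iterate_mem_of_eqOn_compl (s := {y}) (f := xp.2.1)
        (fun w hw ↦ (update_of_ne hw ..).symm) (by simpa using xp.2.2.exists_iterate_eq_root v)⟩
  left_inv F := Subtype.ext (by simp)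
  right_inv xp := Prod.ext (Subtype.ext (update_self y _ _)) (Subtype.ext (by
    simpa only [update_idem] using update_eq_self_iff.mpr xp.2.2.map_root.symm))

end SimpleGraph

section CompleteBipartite

open SimpleGraph Sum

variable {α β : Type*}

def bipartiteMap (f : α → β) (g : β → α) : α ⊕ β → α ⊕ β := Sum.elim (inr ∘ f) (inl ∘ g)

lemma completeBipartiteGraph_adj_bipartiteMap (f : α → β) (g : β → α) (v : α ⊕ β) :
    (completeBipartiteGraph α β).Adj v (bipartiteMap f g v) := by
  cases v <;> simp [bipartiteMap]

lemma bipartiteMap_iterate_two_mul (f : α → β) (g : β → α) (n : ℕ) (a : α) :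
    (bipartiteMap f g)^[2 * n] (inl a) = inl ((g ∘ f)^[n] a) := by
  induction n generalizing a with
  | zero => rfl
  | succ n ih =>
    rw [Nat.mul_succ, iterate_add_apply]
    exact ih (g (f a))

lemma forall_exists_bipartiteMap_iterate_eq_inl_iff {f : α → β} {g : β → α} {x : α} :
    (∀ v, ∃ n, (bipartiteMap f g)^[n] v = inl x) ↔ ∀ a, ∃ n, (g ∘ f)^[n] a = x := by
  refine ⟨fun h a ↦ ?_, fun h v ↦ ?_⟩
  · obtain ⟨n, hn⟩ := h (inl a)
    obtain ⟨k, rfl | rfl⟩ := Nat.even_or_odd' n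
    · exact ⟨k, inl_injective (by rw [← hn, bipartiteMap_iterate_two_mul])⟩
    · rw [iterate_succ_apply', bipartiteMap_iterate_two_mul] at hn
      simp [bipartiteMap] at hn
  · cases v with
    | inl a =>
      obtain ⟨n, hn⟩ := h a
      exact ⟨2 * n, by rw [bipartiteMap_iterate_two_mul, hn]⟩
    | inr b =>
      obtain ⟨n, hn⟩ := h (g b)
      exact ⟨2 * n + 1, by rw [iterate_succ_apply, ← hn]; exact bipartiteMap_iterate_two_mul ..⟩

lemma card_completeBipartiteGraph_adj_inl (x : α) :
    Nat.card {w // (completeBipartiteGraph α β).Adj (inl x) w} = Nat.card β := by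
  refine (Nat.card_eq_of_bijective (fun b ↦ ⟨inr b, by simp⟩)
    ⟨fun b c h ↦ inr_injective (congrArg Subtype.val h), ?_⟩).symm
  rintro ⟨_ | b, hw⟩
  · simp at hw
  · exact ⟨b, rfl⟩

lemma card_completeBipartiteGraph_maps_reaching_inl (x : α) :
    Nat.card {F : α ⊕ β → α ⊕ β //
        (∀ v, (completeBipartiteGraph α β).Adj v (F v)) ∧ ∀ v, ∃ n, F^[n] v = inl x} =
      Nat.card (Σ g : β → α, {f : α → β // ∀ a, ∃ n, (g ∘ f)^[n] a = x}) := by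
  refine (Nat.card_eq_of_bijective (fun p ↦ ⟨bipartiteMap p.2.1 p.1,
    completeBipartiteGraph_adj_bipartiteMap _ _,
    forall_exists_bipartiteMap_iterate_eq_inl_iff.mpr p.2.2⟩) ⟨fun p q e ↦ ?_, ?_⟩).symm
  · have e := congrArg Subtype.val e
    exact Sigma.subtype_ext (funext fun b ↦ inl_injective (congrFun e (inr b)))
      (funext fun a ↦ inr_injective (congrFun e (inl a)))
  · rintro ⟨F, hadj, hreach⟩
    have hf : ∀ a, ∃ b, F (inl a) = inr b := fun a ↦ by
      have := hadj (inl a)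
      cases h : F (inl a) <;> simp_all
    have hg : ∀ b, ∃ a, F (inr b) = inl a := fun b ↦ by
      have := hadj (inr b)
      cases h : F (inr b) <;> simp_all
    choose f hf using hf
    choose g hg using hg
    obtain rfl : bipartiteMap f g = F :=
      funext fun v ↦ by cases v <;> simp [bipartiteMap, hf, hg]
    exact ⟨⟨g, f, forall_exists_bipartiteMap_iterate_eq_inl_iff.mp hreach⟩, rfl⟩

theorem card_mul_card_mul_card_isTree_completeBipartiteGraph [Fintype α] [Fintype β]
    [Nonempty α] :
    Nat.card α * (Nat.card β *
      Nat.card {H : SimpleGraph (α ⊕ β) // H ≤ completeBipartiteGraph α β ∧ H.IsTree}) =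
      Nat.card β ^ Nat.card α * Nat.card α ^ Nat.card β := by
  classical
  set T := Nat.card {H : SimpleGraph (α ⊕ β) // H ≤ completeBipartiteGraph α β ∧ H.IsTree}
  have hx (x : α) : Nat.card (Σ g : β → α, {f : α → β // ∀ a, ∃ n, (g ∘ f)^[n] a = x}) =
      Nat.card β * T := by
    rw [← card_completeBipartiteGraph_maps_reaching_inl,
      Nat.card_congr (equivAdjProdIsParentMap _ _), Nat.card_prod,
      card_completeBipartiteGraph_adj_inl, card_isParentMap]
  calc Nat.card α * (Nat.card β * T)
      = ∑ x : α, Nat.card (Σ g : β → α, {f : α → β // ∀ a, ∃ n, (g ∘ f)^[n] a = x}) := by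
        simp only [hx, Finset.sum_const, Finset.card_univ, smul_eq_mul, Nat.card_eq_fintype_card]
    _ = ∑ g : β → α, Nat.card (Σ x : α, {f : α → β // ∀ a, ∃ n, (g ∘ f)^[n] a = x}) := by
        simp only [Nat.card_sigma]
        exact Finset.sum_comm
    _ = Nat.card β ^ Nat.card α * Nat.card α ^ Nat.card β := by
        simp only [← Nat.card_congr (Joyal.equiv _), Finset.sum_const, Finset.card_univ,
          smul_eq_mul, ← Nat.card_eq_fintype_card, Nat.card_fun, mul_comm]

end CompleteBipartite

/-- Cayley's formula for complete bipartite graphs: the number of spanning trees of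
`K_{n,m}` (with parts of sizes `n ≥ 1` and `m ≥ 1`) equals `n ^ (m - 1) * m ^ (n - 1)`. -/
theorem cayley_formula_bipartite (n m : ℕ) (hn : 1 ≤ n) (hm : 1 ≤ m) :
    Nat.card {H : SimpleGraph (Fin n ⊕ Fin m) //
        H ≤ completeBipartiteGraph (Fin n) (Fin m) ∧ H.IsTree} =
      n ^ (m - 1) * m ^ (n - 1) := by
  obtain ⟨n, rfl⟩ := Nat.exists_eq_add_of_le' hn
  obtain ⟨m, rfl⟩ := Nat.exists_eq_add_of_le' hm
  have key := card_mul_card_mul_card_isTree_completeBipartiteGraph (α := Fin (n + 1))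
    (β := Fin (m + 1))
  rw [Nat.card_fin, Nat.card_fin] at key
  refine mul_left_cancel₀ (by omega : m + 1 ≠ 0) (mul_left_cancel₀ (by omega : n + 1 ≠ 0) ?_)
  rw [key, Nat.add_sub_cancel, Nat.add_sub_cancel]
  ring
end

section
/- Ore's theorem: let G be a finite simple undirected graph on n ≥ 3 vertices such that for every pair of distinct non-adjacent vertices u and v, deg(u) + deg(v) ≥ n. Then G is Hamiltonian. -/
/-!
Adding an edge `uv` between non-adjacent vertices preserves Ore's condition, so by downward
induction on `G` (the complete graph being Hamiltonian) we may assume that `G ⊔ edge u v`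
has a Hamiltonian cycle. Either it avoids `uv`, or removing `uv` leaves a Hamiltonian path
`u = x₀, …, xₙ₋₁ = v` of `G`. Among the `n - 1` indices `i < n - 1`, at least `deg u`
satisfy `u ~ xᵢ₊₁` and at least `deg v` satisfy `xᵢ ~ v`; as `deg u + deg v ≥ n`, some `i`
does both, and then `x₀ ⋯ xᵢ xₙ₋₁ ⋯ xᵢ₊₁ x₀` is a Hamiltonian cycle of `G`.
-/

open Finset SimpleGraph Walk

namespace SimpleGraph

variable {V : Type*} {G : SimpleGraph V} {u v : V}

theorem isHamiltonian_top [DecidableEq V] [Fintype V] (h3 : 3 ≤ Fintype.card V) :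
    (⊤ : SimpleGraph V).IsHamiltonian := by
  intro _
  obtain ⟨v, c, hc, hlen⟩ := (cycleGraph_isContained_iff (G := (⊤ : SimpleGraph V)) h3).mp <|
    isContained_top_iff.mpr ⟨(Fintype.equivFin V).symm.toEmbedding⟩
  exact ⟨v, c, isHamiltonianCycle_iff_isCycle_and_length_eq.mpr ⟨hc, hlen⟩⟩

namespace Walk

theorem IsHamiltonian.of_support_perm [DecidableEq V] {u' v' : V} {p : G.Walk u v}
    {q : G.Walk u' v'} (hp : p.IsHamiltonian) (h : q.support.Perm p.support) :
    q.IsHamiltonian :=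
  fun a => (h.count_eq a).trans (hp a)

theorem IsHamiltonian.isHamiltonianCycle_cons [DecidableEq V] [Fintype V] {p : G.Walk u v}
    (hp : p.IsHamiltonian) (h : G.Adj v u) (h3 : 3 ≤ Fintype.card V) :
    (cons h p).IsHamiltonianCycle := by
  rw [isHamiltonianCycle_iff_isCycle_and_length_eq, isCycle_iff_isPath_tail_and_le_length]
  simp only [tail_cons, length_cons, hp.length_eq]
  exact ⟨⟨(isPath_copy ..).mpr hp.isPath, by omega⟩, by omega⟩

theorem IsHamiltonianCycle.reverse [DecidableEq V] [Fintype V] {c : G.Walk u u}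
    (hc : c.IsHamiltonianCycle) : c.reverse.IsHamiltonianCycle := by
  rw [isHamiltonianCycle_iff_isCycle_and_length_eq] at hc ⊢
  exact ⟨hc.1.reverse, by rw [length_reverse, hc.2]⟩

theorem IsHamiltonian.transfer [DecidableEq V] {H : SimpleGraph V} {p : G.Walk u v}
    (hp : p.IsHamiltonian) (hH : ∀ e ∈ p.edges, e ∈ H.edgeSet) :
    (p.transfer H hH).IsHamiltonian := by
  simpa [IsHamiltonian] using hp

theorem IsHamiltonianCycle.transfer [DecidableEq V] [Fintype V] {H : SimpleGraph V}
    {c : G.Walk u u} (hc : c.IsHamiltonianCycle) (hH : ∀ e ∈ c.edges, e ∈ H.edgeSet) :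
    (c.transfer H hH).IsHamiltonianCycle := by
  rw [isHamiltonianCycle_iff_isCycle_and_length_eq, length_transfer]
  exact ⟨hc.isCycle.transfer hH, hc.length_eq⟩

theorem IsCycle.mk_snd_notMem_edges_tail {c : G.Walk u u} (hc : c.IsCycle) :
    s(u, c.snd) ∉ c.tail.edges := by
  cases c with
  | nil => exact absurd hc.not_nil (by simp)
  | cons h p => simpa using ((cons_isCycle_iff p h).mp hc).2

theorem IsCycle.eq_snd_or_eq_penultimate_of_mem_edges {c : G.Walk u u} (hc : c.IsCycle)
    (h : s(u, v) ∈ c.edges) : v = c.snd ∨ v = c.penultimate := by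
  cases c with
  | nil => simp at h
  | cons h' p =>
    obtain ⟨hp, -⟩ := (cons_isCycle_iff p h').mp hc
    rw [edges_cons, List.mem_cons] at h
    rcases h with h | h
    · exact Or.inl (by simpa using (Sym2.congr_right.mp h))
    · have hnil : ¬p.Nil := fun hnil => by simp [hnil.eq] at h'
      rw [penultimate_cons_of_not_nil _ _ hnil]
      exact Or.inr (hp.eq_penultimate_of_mem_edges h)

theorem IsHamiltonianCycle.exists_isHamiltonian_notMem_edges [DecidableEq V] [Fintype V]
    {c : G.Walk u u} (hc : c.IsHamiltonianCycle) (h : s(u, v) ∈ c.edges) :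
    ∃ p : G.Walk v u, p.IsHamiltonian ∧ s(u, v) ∉ p.edges := by
  wlog hv : v = c.snd generalizing c
  · refine this hc.reverse (by simpa using h) ?_
    rw [snd_reverse]
    exact (hc.isCycle.eq_snd_or_eq_penultimate_of_mem_edges h).resolve_left hv
  subst hv
  exact ⟨c.tail, hc.isHamiltonian_tail, hc.isCycle.mk_snd_notMem_edges_tail⟩

theorem edges_subset_edgeSet_of_sup_edge_of_notMem {a b : V} {p : (G ⊔ edge u v).Walk a b}
    (hp : s(u, v) ∉ p.edges) : ∀ e ∈ p.edges, e ∈ G.edgeSet := by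
  intro e he
  rcases (edgeSet_sup _ _ ▸ p.edges_subset_edgeSet he) with h | h
  · exact h
  · exact absurd (Set.mem_singleton_iff.mp (edgeSet_edge_subset h) ▸ he) hp

/-- The Pósa rotation of `p = x₀ ⋯ xₙ` along the edge `xᵢxₙ`: the walk `x₀ ⋯ xᵢ xₙ ⋯ xᵢ₊₁`. -/
def posaRotation (p : G.Walk u v) (i : ℕ) (h : G.Adj (p.getVert i) v) :
    G.Walk u (p.getVert (i + 1)) :=
  (p.take i).append (cons h (p.drop (i + 1)).reverse)

theorem support_posaRotation_perm (p : G.Walk u v) {i : ℕ} (hi : i < p.length)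
    (h : G.Adj (p.getVert i) v) : (p.posaRotation i h).support.Perm p.support := by
  rw [posaRotation, support_append, support_cons, List.tail_cons, support_reverse, support_take,
    drop_support_eq_support_drop_min, min_eq_left hi]
  exact ((List.perm_append_left_iff _).mpr (List.reverse_perm _)).trans
    (by rw [List.take_append_drop])

theorem IsHamiltonian.exists_crossing [DecidableEq V] [Fintype V] [DecidableRel G.Adj]
    {p : G.Walk u v} (hp : p.IsHamiltonian)
    (hdeg : Fintype.card V ≤ G.degree u + G.degree v) :
    ∃ i < p.length, G.Adj u (p.getVert (i + 1)) ∧ G.Adj (p.getVert i) v := by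
  set S := (range p.length).filter fun i => G.Adj u (p.getVert (i + 1))
  set T := (range p.length).filter fun i => G.Adj (p.getVert i) v
  have hS : G.degree u ≤ #S := by
    rw [← card_neighborFinset_eq_degree]
    refine (card_le_card fun w hw => ?_).trans
      (card_image_le (f := fun i => p.getVert (i + 1)))
    rw [mem_neighborFinset] at hw
    obtain ⟨j, rfl, hj⟩ := mem_support_iff_exists_getVert.mp (hp.mem_support w)
    have hj0 : j ≠ 0 := by rintro rfl; simp at hw
    obtain ⟨k, rfl⟩ := Nat.exists_eq_succ_of_ne_zero hj0
    exact mem_image.mpr ⟨k, mem_filter.mpr ⟨mem_range.mpr (by omega), hw⟩, rfl⟩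
  have hT : G.degree v ≤ #T := by
    rw [← card_neighborFinset_eq_degree]
    refine (card_le_card fun w hw => ?_).trans (card_image_le (f := p.getVert))
    rw [mem_neighborFinset] at hw
    obtain ⟨j, rfl, hj⟩ := mem_support_iff_exists_getVert.mp (hp.mem_support w)
    have hjl : j ≠ p.length := by rintro rfl; simp at hw
    exact mem_image.mpr ⟨j, mem_filter.mpr ⟨mem_range.mpr (by omega), hw.symm⟩, rfl⟩
  have hST : #(S ∪ T) ≤ p.length :=
    (card_le_card (union_subset (filter_subset _ _) (filter_subset _ _))).trans (card_range _).le
  have hlen : p.length < Fintype.card V := by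
    have := Fintype.card_pos_iff.mpr ⟨u⟩
    rw [hp.length_eq]; omega
  obtain ⟨i, hi⟩ : (S ∩ T).Nonempty := by
    rw [← card_pos]; have := card_union_add_card_inter S T; omega
  simp only [S, T, mem_inter, mem_filter, mem_range] at hi
  exact ⟨i, hi.1.1, hi.1.2, hi.2.2⟩

end Walk

theorem isHamiltonian_of_isHamiltonian_walk [DecidableEq V] [Fintype V] [DecidableRel G.Adj]
    {p : G.Walk u v} (hp : p.IsHamiltonian) (h3 : 3 ≤ Fintype.card V)
    (hdeg : Fintype.card V ≤ G.degree u + G.degree v) : G.IsHamiltonian := by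
  obtain ⟨i, hi, hu, hv⟩ := hp.exists_crossing hdeg
  have hq := hp.of_support_perm (p.support_posaRotation_perm hi hv)
  exact fun _ => ⟨_, cons hu.symm _, hq.isHamiltonianCycle_cons hu.symm h3⟩

theorem isHamiltonian_of_isHamiltonian_sup_edge [DecidableEq V] [Fintype V] [DecidableRel G.Adj]
    (h3 : 3 ≤ Fintype.card V) (hdeg : Fintype.card V ≤ G.degree u + G.degree v)
    (hG : (G ⊔ edge u v).IsHamiltonian) : G.IsHamiltonian := by
  have : Nontrivial V := Fintype.one_lt_card_iff_nontrivial.mp (by omega)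
  obtain ⟨c, hc⟩ := hG.exists_isHamiltonianCycle u
  by_cases huv : s(u, v) ∈ c.edges
  · obtain ⟨p, hp, hpuv⟩ := hc.exists_isHamiltonian_notMem_edges huv
    exact isHamiltonian_of_isHamiltonian_walk
      (hp.transfer (edges_subset_edgeSet_of_sup_edge_of_notMem hpuv)) h3 (by rwa [add_comm])
  · exact fun _ => ⟨u, _, hc.transfer (edges_subset_edgeSet_of_sup_edge_of_notMem huv)⟩

theorem isHamiltonian_of_card_le_degree_add_degree [DecidableEq V] [Fintype V] (G : SimpleGraph V)
    [DecidableRel G.Adj] (h3 : 3 ≤ Fintype.card V)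
    (hG : ∀ u v, u ≠ v → ¬G.Adj u v → Fintype.card V ≤ G.degree u + G.degree v) :
    G.IsHamiltonian := by
  suffices ∀ (G : SimpleGraph V) [DecidableRel G.Adj],
      (∀ u v, u ≠ v → ¬G.Adj u v → Fintype.card V ≤ G.degree u + G.degree v) →
        G.IsHamiltonian from this G hG
  intro G
  induction G using WellFoundedGT.induction with
  | _ G ih =>
  intro _ hG
  by_cases htop : G = ⊤
  · exact htop ▸ isHamiltonian_top h3
  obtain ⟨u, v, huv, hnadj⟩ : ∃ u v, u ≠ v ∧ ¬G.Adj u v := by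
    by_contra! h
    exact htop (eq_top_iff.mpr fun u v => h u v)
  have hle : G ≤ G ⊔ edge u v := le_sup_left
  classical
  refine isHamiltonian_of_isHamiltonian_sup_edge h3 (hG u v huv hnadj)
    (ih _ (lt_sup_edge _ _ _ huv hnadj) fun a b hab hnadj' => ?_)
  exact (hG a b hab fun h => hnadj' (hle h)).trans
    (add_le_add (degree_le_of_le hle) (degree_le_of_le hle))

end SimpleGraph

/-- Ore's theorem: if `G` is a finite simple undirected graph on `n ≥ 3` vertices
such that every pair of distinct non-adjacent vertices has degree sum at least `n`,
then `G` is Hamiltonian. -/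
theorem ore_theorem {V : Type*} [Fintype V] [DecidableEq V]
    (G : SimpleGraph V) [DecidableRel G.Adj] (n : ℕ)
    (hn : Fintype.card V = n) (h3 : 3 ≤ n)
    (h : ∀ u v : V, u ≠ v → ¬G.Adj u v → n ≤ G.degree u + G.degree v) :
    G.IsHamiltonian := by
  subst hn
  exact isHamiltonian_of_card_le_degree_add_degree G h3 h
end

section
/- Ford–Fulkerson max-flow min-cut theorem: let (V, c, s, t) be a flow network on a finite vertex set V. Then there exist a flow f* and an s,t-cut (A*, B*) with F(f*) = C(A*, B*), and for every flow f and every s,t-cut (A, B) one has F(f) ≤ C(A, B); consequently the maximum value of a flow equals the minimum capacity of an s,t-cut. -/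
/-! A maximum flow exists because the flows form a nonempty compact set on which the value is
continuous. For a maximum flow `f`, let `A` be the set of vertices reachable from `s` through
edges that are not saturated. If `t` were in `A`, pushing a small amount of flow along such a
walk would increase the value, so `(A, Aᶜ)` is an `s,t`-cut; every edge leaving `A` is saturated,
hence the flow across it, which is the value of `f`, equals its capacity. The inequality between
any flow and any cut is the same computation with `f u v ≤ c u v`. -/

open Finset

/-- `f` is a flow on the network with capacity `c`, source `s` and terminal `t`:
skew symmetry, capacity constraint and conservation at interior vertices. -/
def IsFlow {V : Type*} [Fintype V] (c : V → V → ℝ) (s t : V) (f : V → V → ℝ) : Prop :=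
  (∀ u v, f u v = -f v u) ∧ (∀ u v, f u v ≤ c u v) ∧
    (∀ u, u ≠ s → u ≠ t → ∑ v : V, f u v = 0)

/-- The value of a flow `f` with source `s`. -/
def flowValue {V : Type*} [Fintype V] (s : V) (f : V → V → ℝ) : ℝ :=
  ∑ v : V, f s v

/-- `(A, B)` is an `s,t`-cut: `A` and `B` are disjoint sets covering all vertices,
with `s ∈ A` and `t ∈ B`. -/
def IsCut {V : Type*} [Fintype V] [DecidableEq V] (s t : V) (A B : Finset V) : Prop :=
  Disjoint A B ∧ A ∪ B = Finset.univ ∧ s ∈ A ∧ t ∈ B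

/-- The capacity of the cut `(A, B)`. -/
def cutCapacity {V : Type*} [Fintype V] (c : V → V → ℝ) (A B : Finset V) : ℝ :=
  ∑ u ∈ A, ∑ v ∈ B, c u v

section FlowNetwork

variable {V : Type*} {c f g : V → V → ℝ} {s t : V}

section CutDuality

variable [Fintype V] [DecidableEq V] {A B : Finset V}

theorem flowValue_eq_sum_across_cut (hf : IsFlow c s t f) (hAB : IsCut s t A B) :
    flowValue s f = ∑ u ∈ A, ∑ v ∈ B, f u v := by
  obtain ⟨hanti, -, hcons⟩ := hf
  obtain ⟨hdisj, hunion, hsA, htB⟩ := hAB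
  have hout : flowValue s f = ∑ u ∈ A, ∑ v, f u v := by
    refine (sum_eq_single_of_mem s hsA fun u hu hus => hcons u hus ?_).symm
    rintro rfl
    exact disjoint_left.mp hdisj hu htB
  have hinside : ∑ u ∈ A, ∑ v ∈ A, f u v = 0 := by
    have hswap : ∑ u ∈ A, ∑ v ∈ A, f u v = -∑ u ∈ A, ∑ v ∈ A, f u v := by
      nth_rewrite 1 [sum_comm]
      simp only [← sum_neg_distrib]
      exact sum_congr rfl fun u _ => sum_congr rfl fun v _ => hanti v u
    linarith
  simp only [hout, ← hunion, sum_union hdisj, sum_add_distrib, hinside, zero_add]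

theorem flowValue_le_cutCapacity (hf : IsFlow c s t f) (hAB : IsCut s t A B) :
    flowValue s f ≤ cutCapacity c A B := by
  rw [flowValue_eq_sum_across_cut hf hAB]
  exact sum_le_sum fun u _ => sum_le_sum fun v _ => hf.2.1 u v

theorem flowValue_eq_cutCapacity_of_saturated (hf : IsFlow c s t f) (hAB : IsCut s t A B)
    (hsat : ∀ u ∈ A, ∀ v ∈ B, c u v ≤ f u v) : flowValue s f = cutCapacity c A B := by
  rw [flowValue_eq_sum_across_cut hf hAB]
  exact sum_congr rfl fun u hu => sum_congr rfl fun v hv =>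
    le_antisymm (hf.2.1 u v) (hsat u hu v hv)

end CutDuality

section MaxFlow

variable [Fintype V]

theorem isFlow_zero (hc : ∀ u v, 0 ≤ c u v) : IsFlow c s t 0 :=
  ⟨by simp, hc, by simp⟩

theorem isClosed_setOf_isFlow : IsClosed {f : V → V → ℝ | IsFlow c s t f} := by
  simp only [IsFlow, Set.ofPred_and, Set.ofPred_forall]
  refine .inter (isClosed_iInter fun u => isClosed_iInter fun v => isClosed_eq ?_ ?_)
    (.inter (isClosed_iInter fun u => isClosed_iInter fun v => isClosed_le ?_ ?_)
      (isClosed_iInter fun u => isClosed_iInter fun _ => isClosed_iInter fun _ =>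
        isClosed_eq ?_ ?_)) <;> fun_prop

theorem isCompact_setOf_isFlow : IsCompact {f : V → V → ℝ | IsFlow c s t f} := by
  refine (isCompact_univ_pi fun u => isCompact_univ_pi fun v => isCompact_Icc (a := -c v u)
    (b := c u v)).of_isClosed_subset isClosed_setOf_isFlow fun f hf => ?_
  simp only [Set.mem_univ_pi, Set.mem_Icc]
  exact fun u v => ⟨by linarith [hf.1 u v, hf.2.1 v u], hf.2.1 u v⟩

theorem exists_maximal_flow (hc : ∀ u v, 0 ≤ c u v) :
    ∃ f, IsFlow c s t f ∧ ∀ g, IsFlow c s t g → flowValue s g ≤ flowValue s f := by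
  have hcont : Continuous (flowValue s : (V → V → ℝ) → ℝ) := by
    unfold flowValue; fun_prop
  obtain ⟨f, hf, hmax⟩ :=
    isCompact_setOf_isFlow.exists_isMaxOn ⟨0, isFlow_zero hc⟩ hcont.continuousOn
  exact ⟨f, hf, fun g hg => hmax hg⟩

end MaxFlow

section Augmentation

def IsFeasibleDirection (c f g : V → V → ℝ) : Prop :=
  ∃ δ > 0, ∀ u v, f u v + δ * g u v ≤ c u v

def ResidualAdj (c f : V → V → ℝ) (u v : V) : Prop :=
  f u v < c u v

theorem isFeasibleDirection_zero (hf : ∀ u v, f u v ≤ c u v) : IsFeasibleDirection c f 0 :=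
  ⟨1, one_pos, by simpa using hf⟩

theorem IsFeasibleDirection.add (hf : ∀ u v, f u v ≤ c u v) {h : V → V → ℝ}
    (hg : IsFeasibleDirection c f g) (hh : IsFeasibleDirection c f h) :
    IsFeasibleDirection c f (g + h) := by
  obtain ⟨δ₁, hδ₁, hg⟩ := hg
  obtain ⟨δ₂, hδ₂, hh⟩ := hh
  have hδ : 0 < min δ₁ δ₂ := lt_min hδ₁ hδ₂
  -- shrinking a feasible step keeps it feasible (as `f ≤ c`); then average the two steps
  refine ⟨min δ₁ δ₂ / 2, half_pos hδ, fun u v => ?_⟩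
  have hg' : f u v + min δ₁ δ₂ * g u v ≤ c u v := by
    rcases le_total (g u v) 0 with hneg | hpos
    · nlinarith [hf u v]
    · nlinarith [hg u v, min_le_left δ₁ δ₂]
  have hh' : f u v + min δ₁ δ₂ * h u v ≤ c u v := by
    rcases le_total (h u v) 0 with hneg | hpos
    · nlinarith [hf u v]
    · nlinarith [hh u v, min_le_right δ₁ δ₂]
  simp only [Pi.add_apply]
  linarith

variable [DecidableEq V]

def edgeFlow (a b : V) (u v : V) : ℝ :=
  (if u = a ∧ v = b then 1 else 0) - (if u = b ∧ v = a then 1 else 0)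

theorem edgeFlow_antisymm (a b u v : V) : edgeFlow a b u v = -edgeFlow a b v u := by
  unfold edgeFlow
  split_ifs <;> grind

theorem sum_edgeFlow [Fintype V] (a b u : V) :
    ∑ v, edgeFlow a b u v = (if u = a then 1 else 0) - (if u = b then 1 else 0) := by
  simp [edgeFlow, sum_sub_distrib, ite_and]

theorem isFeasibleDirection_edgeFlow (hf : ∀ u v, f u v ≤ c u v) {a b : V}
    (hab : ResidualAdj c f a b) : IsFeasibleDirection c f (edgeFlow a b) := by
  refine ⟨c a b - f a b, sub_pos.mpr hab, fun u v => ?_⟩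
  have := hf u v
  unfold edgeFlow
  split_ifs with h₁ h₂ h₂ <;> grind

theorem exists_feasibleDirection_of_reflTransGen [Fintype V] (hf : ∀ u v, f u v ≤ c u v) {v : V}
    (hv : Relation.ReflTransGen (ResidualAdj c f) s v) :
    ∃ g, (∀ u w, g u w = -g w u) ∧
      (∀ u, ∑ w, g u w = (if u = s then 1 else 0) - (if u = v then 1 else 0)) ∧
      IsFeasibleDirection c f g := by
  induction hv with
  | refl => exact ⟨0, by simp, by simp, isFeasibleDirection_zero hf⟩
  | @tail a b _ hab ih =>
    obtain ⟨g, hanti, hdiv, hfeas⟩ := ih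
    refine ⟨g + edgeFlow a b, fun u w => ?_, fun u => ?_,
      hfeas.add hf (isFeasibleDirection_edgeFlow hf hab)⟩
    · simp only [Pi.add_apply, hanti u w, edgeFlow_antisymm a b u w, neg_add]
    · simp only [Pi.add_apply, sum_add_distrib, hdiv, sum_edgeFlow]
      ring

theorem not_reflTransGen_residualAdj_of_maximal [Fintype V] (hst : s ≠ t) (hf : IsFlow c s t f)
    (hmax : ∀ g, IsFlow c s t g → flowValue s g ≤ flowValue s f) :
    ¬ Relation.ReflTransGen (ResidualAdj c f) s t := by
  intro ht
  obtain ⟨g, hanti, hdiv, δ, hδ, hcap⟩ := exists_feasibleDirection_of_reflTransGen hf.2.1 ht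
  have hsum (u : V) : ∑ w, (f + δ • g) u w = ∑ w, f u w + δ * ∑ w, g u w := by
    simp only [Pi.add_apply, Pi.smul_apply, smul_eq_mul, sum_add_distrib, mul_sum]
  have haug : IsFlow c s t (f + δ • g) := by
    refine ⟨fun u w => ?_, fun u w => hcap u w, fun u hus hut => ?_⟩
    · simp only [Pi.add_apply, Pi.smul_apply, smul_eq_mul, hf.1 u w, hanti u w]
      ring
    · rw [hsum, hf.2.2 u hus hut, hdiv]
      simp [hus, hut]
  have hval : flowValue s (f + δ • g) = flowValue s f + δ := by
    simp only [flowValue, hsum, hdiv, if_neg hst, if_true, sub_zero, mul_one]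
  linarith [hmax _ haug]

end Augmentation

end FlowNetwork

/-- Ford–Fulkerson max-flow min-cut theorem: there exist a flow `f*` and an
`s,t`-cut `(A*, B*)` with value `f* = capacity (A*, B*)`, and every flow value is
at most every cut capacity; hence the maximum flow value equals the minimum cut
capacity. -/
theorem ford_fulkerson_max_flow_min_cut {V : Type*} [Fintype V] [DecidableEq V]
    (s t : V) (hst : s ≠ t) (c : V → V → ℝ) (hc : ∀ u v, 0 ≤ c u v) :
    (∃ (f : V → V → ℝ) (A B : Finset V), IsFlow c s t f ∧ IsCut s t A B ∧
      flowValue s f = cutCapacity c A B) ∧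
    (∀ (f : V → V → ℝ) (A B : Finset V), IsFlow c s t f → IsCut s t A B →
      flowValue s f ≤ cutCapacity c A B) := by
  classical
  refine ⟨?_, fun f A B hf hAB => flowValue_le_cutCapacity hf hAB⟩
  obtain ⟨f, hf, hmax⟩ := exists_maximal_flow (s := s) (t := t) hc
  set A : Finset V := {v | Relation.ReflTransGen (ResidualAdj c f) s v}
  have hcut : IsCut s t A Aᶜ := by
    refine ⟨disjoint_compl_right, union_compl A, by simp [A, Relation.ReflTransGen.refl], ?_⟩
    simpa [A] using not_reflTransGen_residualAdj_of_maximal hst hf hmax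
  refine ⟨f, A, Aᶜ, hf, hcut, flowValue_eq_cutCapacity_of_saturated hf hcut fun u hu v hv => ?_⟩
  by_contra huv
  simp only [A, mem_compl, mem_filter_univ] at hu hv
  exact hv (hu.tail (not_le.mp huv))
end

section
/- Let G be a connected finite simple undirected graph on n ≥ 2 vertices with m edges. Then 3 − L(G) ≤ 2·E_glob(G) ≤ 1 + D(G), where L(G) is the average shortest path length, E_glob(G) the global efficiency, and D(G) the density of G. -/
/-!
For `d = dist(s, t) ≥ 1` two pointwise inequalities hold: `3 ≤ 2 / d + d`, because
`(d - 1) (d - 2) ≥ 0` for every integer `d`, and `2 / d ≤ 1 + [d = 1]`, where `d = 1` means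
that `s` and `t` are adjacent. Summing over the `n (n - 1)` ordered pairs of distinct vertices,
and using that the ordered adjacent pairs number `2 m`, gives
`3 n (n - 1) ≤ 2 ∑ 1 / d + ∑ d` and `2 ∑ 1 / d ≤ n (n - 1) + 2 m`.
-/

open Finset

theorem Nat.three_le_two_div_add_self {d : ℕ} (hd : d ≠ 0) : 3 ≤ 2 / (d : ℝ) + d := by
  have hd_pos : (0 : ℝ) < d := by positivity
  have h : (0 : ℝ) ≤ ((d : ℝ) - 1) * ((d : ℝ) - 2) := by
    rcases d with _ | _ | d
    · simp
    · simp
    · push_cast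
      nlinarith
  rw [div_add' _ _ _ hd_pos.ne', le_div_iff₀ hd_pos]
  nlinarith

section OrderedPairs

variable {V : Type*} [Fintype V] [DecidableEq V]

theorem sum_sum_ite_ne_mono {f g : V → V → ℝ} (h : ∀ s t, s ≠ t → f s t ≤ g s t) :
    ∑ s : V, ∑ t : V, (if s ≠ t then f s t else 0) ≤
      ∑ s : V, ∑ t : V, (if s ≠ t then g s t else 0) := by
  gcongr with s _ t _
  split_ifs with hst
  · exact h s t hst
  · rfl

theorem sum_sum_ite_ne_one :
    ∑ s : V, ∑ t : V, (if s ≠ t then (1 : ℝ) else 0) =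
      Fintype.card V * (Fintype.card V - 1) := by
  have h_row (s : V) : ∑ t : V, (if s ≠ t then (1 : ℝ) else 0) = Fintype.card V - 1 := by
    have : Nonempty V := ⟨s⟩
    rw [sum_boole, filter_ne, card_erase_of_mem (mem_univ s), card_univ,
      Nat.cast_pred Fintype.card_pos]
  rw [sum_congr rfl fun s _ => h_row s, sum_const, card_univ, nsmul_eq_mul]

end OrderedPairs

namespace SimpleGraph

variable {V : Type*} (G : SimpleGraph V)

theorem sum_sum_ite_adj_one [Fintype V] [DecidableRel G.Adj] :
    ∑ s : V, ∑ t : V, (if G.Adj s t then (1 : ℝ) else 0) = 2 * #G.edgeFinset := by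
  simp only [sum_boole, ← neighborFinset_eq_filter, card_neighborFinset_eq_degree]
  exact_mod_cast G.sum_degrees_eq_twice_card_edges

variable {G}

theorem Connected.three_le_two_div_dist_add_dist (hG : G.Connected) {s t : V} (h : s ≠ t) :
    3 ≤ 2 / (G.dist s t : ℝ) + G.dist s t :=
  Nat.three_le_two_div_add_self (hG.pos_dist_of_ne h).ne'

theorem Connected.two_div_dist_le [DecidableRel G.Adj] (hG : G.Connected) {s t : V}
    (h : s ≠ t) : 2 / (G.dist s t : ℝ) ≤ 1 + if G.Adj s t then 1 else 0 := by
  split_ifs with hadj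
  · rw [dist_eq_one_iff_adj.mpr hadj]
    norm_num
  · have h_two_le : 2 ≤ G.dist s t := by
      have := hG.pos_dist_of_ne h
      have : G.dist s t ≠ 1 := fun h_one => hadj (dist_eq_one_iff_adj.mp h_one)
      omega
    rw [add_zero, div_le_one (by positivity)]
    exact_mod_cast h_two_le

variable [Fintype V] [DecidableEq V]

theorem Connected.three_mul_card_mul_card_sub_one_le (hG : G.Connected) :
    3 * (Fintype.card V * (Fintype.card V - 1)) ≤
      2 * ∑ s : V, ∑ t : V, (if s ≠ t then 1 / (G.dist s t : ℝ) else 0) +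
        ∑ s : V, ∑ t : V, (if s ≠ t then (G.dist s t : ℝ) else 0) :=
  calc 3 * (Fintype.card V * (Fintype.card V - 1))
      = ∑ s : V, ∑ t : V, (if s ≠ t then (3 : ℝ) else 0) := by
        simp only [← sum_sum_ite_ne_one, mul_sum, mul_ite, mul_one, mul_zero]
    _ ≤ ∑ s : V, ∑ t : V, (if s ≠ t then 2 * (1 / (G.dist s t : ℝ)) + G.dist s t else 0) :=
        sum_sum_ite_ne_mono fun _ _ h => by
          simpa only [mul_one_div] using hG.three_le_two_div_dist_add_dist h
    _ = _ := by simp only [mul_sum, ← sum_add_distrib, mul_ite, mul_zero, ite_add_ite, add_zero]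

theorem Connected.two_mul_sum_one_div_dist_le [DecidableRel G.Adj] (hG : G.Connected) :
    2 * ∑ s : V, ∑ t : V, (if s ≠ t then 1 / (G.dist s t : ℝ) else 0) ≤
      Fintype.card V * (Fintype.card V - 1) + 2 * #G.edgeFinset :=
  calc 2 * ∑ s : V, ∑ t : V, (if s ≠ t then 1 / (G.dist s t : ℝ) else 0)
      = ∑ s : V, ∑ t : V, (if s ≠ t then 2 * (1 / (G.dist s t : ℝ)) else 0) := by
        simp only [mul_sum, mul_ite, mul_zero]
    _ ≤ ∑ s : V, ∑ t : V, (if s ≠ t then 1 + (if G.Adj s t then 1 else 0) else 0) :=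
        sum_sum_ite_ne_mono fun _ _ h => by
          simpa only [mul_one_div] using hG.two_div_dist_le h
    _ = ∑ s : V, ∑ t : V, ((if s ≠ t then (1 : ℝ) else 0) + (if G.Adj s t then 1 else 0)) := by
        refine sum_congr rfl fun s _ => sum_congr rfl fun t _ => ?_
        by_cases hst : s = t <;> simp [hst]
    _ = _ := by rw [← sum_sum_ite_ne_one, ← G.sum_sum_ite_adj_one]; simp only [sum_add_distrib]

end SimpleGraph

/-- For a connected finite simple undirected graph on `n ≥ 2` vertices with `m`
edges, `3 − L(G) ≤ 2·E_glob(G) ≤ 1 + D(G)`, where `L(G)` is the average shortest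
path length, `E_glob(G)` the global efficiency and `D(G)` the density. -/
theorem global_efficiency_bounds {V : Type*} [Fintype V] [DecidableEq V]
    (G : SimpleGraph V) [DecidableRel G.Adj] (hG : G.Connected) (n m : ℕ)
    (hn : Fintype.card V = n) (h2 : 2 ≤ n) (hm : G.edgeFinset.card = m) :
    3 - (1 / ((n : ℝ) * (n - 1))) *
        ∑ s : V, ∑ t : V, (if s ≠ t then (G.dist s t : ℝ) else 0) ≤
      2 * ((1 / ((n : ℝ) * (n - 1))) *
        ∑ s : V, ∑ t : V, (if s ≠ t then 1 / (G.dist s t : ℝ) else 0)) ∧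
    2 * ((1 / ((n : ℝ) * (n - 1))) *
        ∑ s : V, ∑ t : V, (if s ≠ t then 1 / (G.dist s t : ℝ) else 0)) ≤
      1 + (2 * (m : ℝ)) / ((n : ℝ) * (n - 1)) := by
  subst hn hm
  have h_lower := hG.three_mul_card_mul_card_sub_one_le
  have h_upper := hG.two_mul_sum_one_div_dist_le
  have h_pairs_pos : (0 : ℝ) < Fintype.card V * (Fintype.card V - 1) := by
    have : (2 : ℝ) ≤ Fintype.card V := by exact_mod_cast h2
    nlinarith
  constructor
  · rw [one_div_mul_eq_div, one_div_mul_eq_div, sub_le_iff_le_add, ← mul_div_assoc,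
      ← add_div, le_div_iff₀ h_pairs_pos]
    linarith
  · rw [one_div_mul_eq_div, ← mul_div_assoc, div_le_iff₀ h_pairs_pos, add_mul,
      div_mul_cancel₀ _ h_pairs_pos.ne']
    linarith
end

section
/- Let G be a connected finite simple undirected graph on n ≥ 2 vertices, and let 0 = λ₁ ≤ λ₂ ≤ … ≤ λₙ be the eigenvalues of its normalized Laplacian matrix Δ. Then λ₂ ≤ n/(n−1), and equality λ₂ = n/(n−1) holds if and only if G is the complete graph K_n. (In particular, among all connected graphs on n vertices the complete graph has the largest possible λ₂.) -/
open Polynomial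

/-- The normalized Laplacian matrix `Δ = D^{-1/2} L D^{-1/2}` of a graph:
`Δ_{ii} = 1`, `Δ_{ij} = -1/√(dᵢdⱼ)` if `{i,j}` is an edge, `0` otherwise. -/
noncomputable def normLapMatrix {V : Type*} [Fintype V] [DecidableEq V]
    (G : SimpleGraph V) [DecidableRel G.Adj] : Matrix V V ℝ :=
  fun i j =>
    if i = j then 1
    else if G.Adj i j then -(1 / Real.sqrt ((G.degree i : ℝ) * (G.degree j : ℝ)))
    else 0

/-!
The normalized Laplacian `Δ` is positive semidefinite with trace `n`, so its eigenvalues are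
nonnegative and sum to `n`; since `λ₂ ≤ ⋯ ≤ λₙ`, this gives `(n - 1) λ₂ ≤ n - λ₁ ≤ n`.
In the equality case the spectrum is `{0, c}` with `c = n / (n - 1)`, which for a symmetric
matrix means `Δ² = c Δ`. On the diagonal this reads `1 + ∑_{j ∼ i} 1 / (dᵢ dⱼ) = c`, i.e. the
mean of `1 / dⱼ` over the neighbours of `i` is `1 / (n - 1)`; as `dⱼ ≤ n - 1`, every neighbour
of every vertex is universal, and `G` is complete. Conversely `Δ(Kₙ) = c I - J / (n - 1)`
satisfies `Δ² = c Δ`, so its eigenvalues lie in `{0, c}`, and the trace leaves room for only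
one zero.
-/

open Finset Matrix

lemma Fin.sum_univ_erase_const {n : ℕ} (a : Fin n) (c : ℝ) :
    ∑ _i ∈ univ.erase a, c = ((n : ℝ) - 1) * c := by
  simp [card_erase_of_mem, Nat.cast_sub (Nat.one_le_of_lt a.isLt)]

section

variable {n : ℕ} (hn : 1 < n) {μ : Fin n → ℝ}
include hn

lemma Monotone.apply_one_le_of_ne_zero (hmono : Monotone μ) {i : Fin n}
    (hi : i ≠ ⟨0, by omega⟩) : μ ⟨1, hn⟩ ≤ μ i :=
  hmono <| Fin.le_def.mpr <| Nat.one_le_iff_ne_zero.mpr fun h => hi (Fin.ext h)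

lemma Monotone.apply_zero_add_mul_apply_one_le_sum (hmono : Monotone μ) :
    μ ⟨0, by omega⟩ + ((n : ℝ) - 1) * μ ⟨1, hn⟩ ≤ ∑ i, μ i := by
  rw [← add_sum_erase _ _ (mem_univ _), ← Fin.sum_univ_erase_const]
  gcongr with i hi
  exact hmono.apply_one_le_of_ne_zero hn (mem_erase.mp hi).1

lemma Monotone.sum_eq_apply_zero_add_mul_apply_one_iff (hmono : Monotone μ) :
    ∑ i, μ i = μ ⟨0, by omega⟩ + ((n : ℝ) - 1) * μ ⟨1, hn⟩ ↔
      ∀ i ≠ ⟨0, by omega⟩, μ i = μ ⟨1, hn⟩ := by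
  rw [← add_sum_erase _ _ (mem_univ _), ← Fin.sum_univ_erase_const, add_right_inj, eq_comm,
    sum_eq_sum_iff_of_le fun i hi => hmono.apply_one_le_of_ne_zero hn (mem_erase.mp hi).1]
  simp [eq_comm]

variable (hmono : Monotone μ) (h0 : 0 ≤ μ ⟨0, by omega⟩) (hsum : ∑ i, μ i = n)
include hmono h0 hsum

lemma Monotone.apply_one_le_of_sum_eq : μ ⟨1, hn⟩ ≤ (n : ℝ) / (n - 1) := by
  have hn' : (0 : ℝ) < n - 1 := by rw [sub_pos]; exact_mod_cast hn
  rw [le_div_iff₀ hn', mul_comm]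
  linarith [hmono.apply_zero_add_mul_apply_one_le_sum hn]

lemma Monotone.apply_one_eq_iff_of_sum_eq :
    μ ⟨1, hn⟩ = (n : ℝ) / (n - 1) ↔ ∀ i, μ i = 0 ∨ μ i = (n : ℝ) / (n - 1) := by
  have hn' : (0 : ℝ) < n - 1 := by rw [sub_pos]; exact_mod_cast hn
  set c : ℝ := (n : ℝ) / (n - 1) with hc
  have hc_pos : 0 < c := by positivity
  constructor
  · intro h1
    have hmul : ((n : ℝ) - 1) * μ ⟨1, hn⟩ = n := by rw [h1, hc, mul_div_cancel₀ _ hn'.ne']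
    have h0' : μ ⟨0, by omega⟩ = 0 := by
      linarith [hmono.apply_zero_add_mul_apply_one_le_sum hn]
    have hrest := (hmono.sum_eq_apply_zero_add_mul_apply_one_iff hn).mp (by linarith)
    intro i
    by_cases hi : i = ⟨0, by omega⟩
    · exact .inl (hi ▸ h0')
    · exact .inr ((hrest i hi).trans h1)
  · intro hval
    -- the defects `c - μ i` are nonnegative and sum to `n c - n = c`
    refine (hval _).resolve_left fun h1 => ?_
    have h0' : μ ⟨0, by omega⟩ = 0 := le_antisymm (h1 ▸ hmono (Fin.mk_le_mk.mpr zero_le_one)) h0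
    have hpair := sum_le_sum_of_subset_of_nonneg (subset_univ {⟨0, by omega⟩, ⟨1, hn⟩})
      fun i _ _ => show 0 ≤ c - μ i by rcases hval i with h | h <;> rw [h] <;> linarith
    rw [sum_pair (by simp [Fin.ext_iff]), h0', h1, sum_sub_distrib, sum_const, card_univ,
      Fintype.card_fin, hsum, nsmul_eq_mul] at hpair
    have : (n : ℝ) * c - n = c := by rw [hc]; field_simp; ring
    linarith

end

namespace Matrix.IsHermitian

variable {n : Type*} [Fintype n] [DecidableEq n] {A : Matrix n n ℝ} (hA : A.IsHermitian)
include hA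

lemma map_eigenvalues_eq_of_charpoly_eq {μ : n → ℝ}
    (h : A.charpoly = ∏ i, (X - C (μ i))) :
    univ.val.map hA.eigenvalues = univ.val.map μ := by
  have hroots := hA.roots_charpoly_eq_eigenvalues
  rw [h, roots_prod _ _ (prod_ne_zero_iff.mpr fun i _ => X_sub_C_ne_zero (μ i))] at hroots
  simpa using hroots.symm

lemma mul_self_eq_smul_iff (c : ℝ) :
    A * A = c • A ↔ ∀ i, hA.eigenvalues i = 0 ∨ hA.eigenvalues i = c := by
  set φ := Unitary.conjStarAlgAut ℝ _ hA.eigenvectorUnitary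
  have hφ : A = φ (diagonal hA.eigenvalues) := by
    simpa [φ] using hA.spectral_theorem
  calc A * A = c • A ↔ φ (diagonal hA.eigenvalues * diagonal hA.eigenvalues)
        = φ (c • diagonal hA.eigenvalues) := by rw [map_mul, map_smul, ← hφ]
    _ ↔ ∀ i, hA.eigenvalues i * hA.eigenvalues i = c * hA.eigenvalues i := by
      rw [EmbeddingLike.apply_eq_iff_eq, diagonal_mul_diagonal, ← diagonal_smul,
        diagonal_eq_diagonal_iff]
      rfl
    _ ↔ _ := forall_congr' fun i => by rw [mul_eq_mul_right_iff, or_comm]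

lemma forall_eigenvalues_iff_of_charpoly_eq {μ : n → ℝ}
    (h : A.charpoly = ∏ i, (X - C (μ i))) (p : ℝ → Prop) :
    (∀ k, p (hA.eigenvalues k)) ↔ ∀ i, p (μ i) := by
  simpa using congrArg (∀ x ∈ ·, p x) (hA.map_eigenvalues_eq_of_charpoly_eq h)

lemma sum_eq_trace_of_charpoly_eq {μ : n → ℝ} (h : A.charpoly = ∏ i, (X - C (μ i))) :
    ∑ i, μ i = A.trace := by
  rw [hA.trace_eq_sum_eigenvalues, sum_eq_multiset_sum, ← hA.map_eigenvalues_eq_of_charpoly_eq h,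
    ← sum_eq_multiset_sum]
  rfl

end Matrix.IsHermitian

namespace SimpleGraph

variable {V : Type*} [Fintype V] [DecidableEq V] (G : SimpleGraph V) [DecidableRel G.Adj]

lemma normLapMatrix_apply_self (i : V) : normLapMatrix G i i = 1 := if_pos rfl

lemma normLapMatrix_apply_of_adj {i j : V} (h : G.Adj i j) :
    normLapMatrix G i j = -(√(G.degree i * G.degree j : ℝ))⁻¹ := by
  simp [normLapMatrix, h.ne, h]

lemma normLapMatrix_apply_of_ne_of_not_adj {i j : V} (hij : i ≠ j) (h : ¬G.Adj i j) :
    normLapMatrix G i j = 0 := by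
  simp [normLapMatrix, hij, h]

/-- Since `(√0)⁻¹ = 0`, the isolated vertices need the second summand. -/
lemma normLapMatrix_eq :
    normLapMatrix G = diagonal (fun v => (√(G.degree v : ℝ))⁻¹) * G.lapMatrix ℝ *
      diagonal (fun v => (√(G.degree v : ℝ))⁻¹) +
        diagonal (fun v => if G.degree v = 0 then 1 else 0) := by
  ext i j
  rw [Matrix.add_apply, mul_diagonal, diagonal_mul]
  rcases eq_or_ne i j with rfl | hij
  · simp only [normLapMatrix_apply_self, diagonal_apply_eq, lapMatrix, degMatrix,
      Matrix.sub_apply, adjMatrix_apply, G.irrefl, if_false, sub_zero]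
    split_ifs with h
    · simp [h]
    · have hd : (0 : ℝ) < G.degree i := by positivity
      field_simp
      simp [Real.sq_sqrt hd.le]
  · simp only [diagonal_apply_ne _ hij, add_zero, lapMatrix, degMatrix, Matrix.sub_apply,
      adjMatrix_apply, zero_sub]
    by_cases h : G.Adj i j
    · rw [normLapMatrix_apply_of_adj G h, if_pos h, Real.sqrt_mul (by positivity)]
      field_simp
    · rw [normLapMatrix_apply_of_ne_of_not_adj G hij h, if_neg h]
      simp

lemma posSemidef_normLapMatrix : (normLapMatrix G).PosSemidef := by
  rw [normLapMatrix_eq]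
  refine .add ?_ (posSemidef_diagonal_iff.mpr fun v => by split_ifs <;> norm_num)
  simpa using (posSemidef_lapMatrix ℝ G).mul_mul_conjTranspose_same
    (diagonal fun v => (√(G.degree v : ℝ))⁻¹)

lemma trace_normLapMatrix : (normLapMatrix G).trace = Fintype.card V := by
  simp [trace, normLapMatrix_apply_self]

lemma normLapMatrix_mul_self_apply_self (i : V) :
    (normLapMatrix G * normLapMatrix G) i i =
      1 + ∑ j ∈ G.neighborFinset i, ((G.degree i : ℝ) * G.degree j)⁻¹ := by
  rw [mul_apply, ← add_sum_erase _ _ (mem_univ i), normLapMatrix_apply_self, one_mul]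
  congr 1
  have hsub : G.neighborFinset i ⊆ univ.erase i := fun j hj =>
    mem_erase.mpr ⟨(G.ne_of_adj ((G.mem_neighborFinset i j).mp hj)).symm, mem_univ j⟩
  rw [← sum_subset hsub fun j hj hnot => ?_]
  · refine sum_congr rfl fun j hj => ?_
    rw [mem_neighborFinset] at hj
    rw [normLapMatrix_apply_of_adj G hj, normLapMatrix_apply_of_adj G hj.symm, neg_mul_neg,
      ← mul_inv, mul_comm (G.degree j : ℝ), Real.mul_self_sqrt (by positivity)]
  · rw [mem_neighborFinset] at hnot
    rw [normLapMatrix_apply_of_ne_of_not_adj G (mem_erase.mp hj).1.symm hnot, zero_mul]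

section MulSelfEqSmul

variable {G} (hV : 1 < Fintype.card V)
  (h : normLapMatrix G * normLapMatrix G =
    ((Fintype.card V : ℝ) / (Fintype.card V - 1)) • normLapMatrix G)
include hV h

lemma sum_inv_degree_mul_degree_of_normLapMatrix_mul_self (i : V) :
    ∑ j ∈ G.neighborFinset i, ((G.degree i : ℝ) * G.degree j)⁻¹ =
      ((Fintype.card V : ℝ) - 1)⁻¹ := by
  have hN : (1 : ℝ) < Fintype.card V := by exact_mod_cast hV
  have hii := congrFun (congrFun h i) i
  rw [normLapMatrix_mul_self_apply_self, Matrix.smul_apply, normLapMatrix_apply_self,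
    smul_eq_mul, mul_one] at hii
  rw [eq_sub_of_add_eq' hii, div_sub_one (sub_pos.mpr hN).ne', sub_sub_cancel, one_div]

lemma degree_ne_zero_of_normLapMatrix_mul_self (i : V) : G.degree i ≠ 0 := by
  have hN : (0 : ℝ) < Fintype.card V - 1 := by rw [sub_pos]; exact_mod_cast hV
  intro hi
  have hsum := sum_inv_degree_mul_degree_of_normLapMatrix_mul_self hV h i
  simp only [hi, CharP.cast_eq_zero, zero_mul, _root_.inv_zero, sum_const_zero] at hsum
  exact (inv_pos.mpr hN).ne hsum

lemma isUniversal_of_adj_of_normLapMatrix_mul_self {i j : V} (hij : G.Adj i j) :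
    G.IsUniversal j := by
  set N : ℝ := (Fintype.card V : ℝ) with hN
  have hle : ∀ k ∈ G.neighborFinset i, (N - 1)⁻¹ ≤ (G.degree k : ℝ)⁻¹ := fun k _ => by
    refine inv_anti₀ ?_ ?_
    · exact_mod_cast Nat.pos_of_ne_zero (degree_ne_zero_of_normLapMatrix_mul_self hV h k)
    · have : (G.degree k : ℝ) + 1 ≤ N := by rw [hN]; exact_mod_cast G.degree_lt_card_verts k
      linarith
  -- multiplying the diagonal identity by `dᵢ = #(neighbours of i)`
  have heq : ∑ k ∈ G.neighborFinset i, (N - 1)⁻¹ =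
      ∑ k ∈ G.neighborFinset i, (G.degree k : ℝ)⁻¹ := by
    have hdi : (G.degree i : ℝ) ≠ 0 := by
      exact_mod_cast degree_ne_zero_of_normLapMatrix_mul_self hV h i
    have hsum := sum_inv_degree_mul_degree_of_normLapMatrix_mul_self hV h i
    simp only [mul_inv, ← mul_sum] at hsum
    rw [sum_const, card_neighborFinset_eq_degree, nsmul_eq_mul, ← hsum, ← mul_assoc,
      mul_inv_cancel₀ hdi, one_mul]
  have hdj := inv_injective <|
    (sum_eq_sum_iff_of_le hle).mp heq j ((G.mem_neighborFinset i j).mpr hij)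
  rw [← degree_eq_card_sub_one, ← Nat.cast_inj (R := ℝ), Nat.cast_sub hV.le, Nat.cast_one]
  linarith

lemma eq_top_of_normLapMatrix_mul_self : G = ⊤ := by
  obtain ⟨i⟩ : Nonempty V := Fintype.card_pos_iff.mp (by omega)
  obtain ⟨j, hij⟩ := G.degree_pos_iff_exists_adj i |>.mp <|
    Nat.pos_of_ne_zero (degree_ne_zero_of_normLapMatrix_mul_self hV h i)
  have hj := isUniversal_of_adj_of_normLapMatrix_mul_self hV h hij
  rw [eq_top_iff_forall_isUniversal]
  intro k
  rcases eq_or_ne j k with rfl | hjk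
  · exact hj
  · exact isUniversal_of_adj_of_normLapMatrix_mul_self hV h (hj hjk)

end MulSelfEqSmul

lemma normLapMatrix_top [DecidableRel (⊤ : SimpleGraph V).Adj] (hV : 1 < Fintype.card V) :
    normLapMatrix (⊤ : SimpleGraph V) =
      ((Fintype.card V : ℝ) / (Fintype.card V - 1)) • (1 : Matrix V V ℝ) -
        (Fintype.card V - 1 : ℝ)⁻¹ • of (fun _ _ => 1) := by
  have hN : (0 : ℝ) < Fintype.card V - 1 := by
    rw [sub_pos]; exact_mod_cast hV
  ext i j
  rcases eq_or_ne i j with rfl | hij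
  · simp [normLapMatrix_apply_self]
    field_simp [hN.ne']
  · have hdeg (v : V) : ((⊤ : SimpleGraph V).degree v : ℝ) = Fintype.card V - 1 := by
      rw [(degree_eq_card_sub_one _ v).mpr IsUniversal.top, Nat.cast_sub hV.le, Nat.cast_one]
    rw [normLapMatrix_apply_of_adj _ hij, hdeg, hdeg, Real.sqrt_mul_self hN.le]
    simp [hij]

lemma normLapMatrix_top_mul_self [DecidableRel (⊤ : SimpleGraph V).Adj]
    (hV : 1 < Fintype.card V) :
    normLapMatrix (⊤ : SimpleGraph V) * normLapMatrix ⊤ =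
      ((Fintype.card V : ℝ) / (Fintype.card V - 1)) • normLapMatrix ⊤ := by
  have hJ : (of fun _ _ => 1 : Matrix V V ℝ) * of (fun _ _ => 1) =
      (Fintype.card V : ℝ) • of (fun _ _ => 1) := by
    ext i j; simp [mul_apply]
  rw [normLapMatrix_top hV]
  simp only [sub_mul, mul_sub, smul_mul_smul, one_mul, mul_one, hJ]
  module

lemma normLapMatrix_mul_self_eq_smul_iff (hV : 1 < Fintype.card V) :
    normLapMatrix G * normLapMatrix G =
      ((Fintype.card V : ℝ) / (Fintype.card V - 1)) • normLapMatrix G ↔ G = ⊤ := by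
  refine ⟨eq_top_of_normLapMatrix_mul_self hV, ?_⟩
  rintro rfl
  exact normLapMatrix_top_mul_self hV

end SimpleGraph

/-- For a connected graph on `n ≥ 2` vertices with normalized Laplacian
eigenvalues `μ 0 ≤ μ 1 ≤ … ≤ μ (n-1)` (listed with multiplicity, i.e. the
characteristic polynomial is `∏ i, (X - μ i)`), the second smallest eigenvalue
satisfies `μ 1 ≤ n/(n-1)`, with equality if and only if `G` is the complete
graph. -/
theorem normLap_second_eigenvalue_le (n : ℕ) (hn : 2 ≤ n)
    (G : SimpleGraph (Fin n)) [DecidableRel G.Adj]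
    (μ : Fin n → ℝ) (hmono : Monotone μ)
    (hchar : (normLapMatrix G).charpoly = ∏ i : Fin n, (X - C (μ i))) :
    μ ⟨1, by omega⟩ ≤ (n : ℝ) / ((n : ℝ) - 1) ∧
      (μ ⟨1, by omega⟩ = (n : ℝ) / ((n : ℝ) - 1) ↔ G = ⊤) := by
  have hΔ := G.posSemidef_normLapMatrix
  have hnonneg : ∀ i, 0 ≤ μ i :=
    (hΔ.isHermitian.forall_eigenvalues_iff_of_charpoly_eq hchar _).mp hΔ.eigenvalues_nonneg
  have hsum : ∑ i, μ i = n := by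
    rw [hΔ.isHermitian.sum_eq_trace_of_charpoly_eq hchar, G.trace_normLapMatrix, Fintype.card_fin]
  refine ⟨hmono.apply_one_le_of_sum_eq hn (hnonneg _) hsum, ?_⟩
  have hcomplete := G.normLapMatrix_mul_self_eq_smul_iff (by rw [Fintype.card_fin]; exact hn)
  rw [Fintype.card_fin] at hcomplete
  rw [hmono.apply_one_eq_iff_of_sum_eq hn (hnonneg _) hsum, ← hcomplete,
    hΔ.isHermitian.mul_self_eq_smul_iff]
  exact (hΔ.isHermitian.forall_eigenvalues_iff_of_charpoly_eq hchar
    fun x => x = 0 ∨ x = (n : ℝ) / (n - 1)).symm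
end

section
/- Let G be a finite simple undirected graph with maximum vertex degree d, let p > 1, and let φ_p(t) = |t|^{p−2}·t. If (λ, x) is an eigenpair of the graph p-Laplacian L_p of G, then λ ≤ 2^{p−1}·d. Moreover, 2^{p−1}·d is an eigenvalue of L_p if and only if G has a connected component that is bipartite and d-regular (in particular containing a vertex realizing the maximum degree d). -/
/-!
Let `x` be an eigenfunction and `i` a vertex where `|x|` is maximal; replacing `x` by `-x` we may
assume `x i > 0`. Since `φ_p` is strictly increasing and `x i - x j ≤ 2 x i`, every term of the
eigenvalue equation at `i` is at most `φ_p(2 x i) = 2^{p-1} φ_p(x i)`, so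
`λ ≤ 2^{p-1} deg i ≤ 2^{p-1} d`.
If `λ = 2^{p-1} d`, equality holds throughout: `deg i = d` and `x j = -x i` at every neighbour `j`,
which is again a maximum of `|x|`. Propagating along walks, `|x|` is constant on the component
of `i`, which is `d`-regular and bipartite with the sign of `x` as bipartition. Conversely the
`±1` vector of the bipartition of such a component, extended by `0`, is an eigenfunction.
-/

open Finset

/-- `φ_p(t) = |t|^{p-2} t`. -/
noncomputable def phiP (p t : ℝ) : ℝ := |t| ^ (p - 2) * t

/-- `(λ, x)` is an eigenpair of the graph `p`-Laplacian `L_p`: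
`x ≠ 0` and for every vertex `i`, `∑_{j ∼ i} φ_p(x i − x j) = λ φ_p(x i)`. -/
def IsPLapEigenpair {V : Type*} [Fintype V] [DecidableEq V]
    (G : SimpleGraph V) [DecidableRel G.Adj] (p : ℝ) (lam : ℝ) (x : V → ℝ) : Prop :=
  x ≠ 0 ∧ ∀ i : V, ∑ j ∈ G.neighborFinset i, phiP p (x i - x j) = lam * phiP p (x i)

lemma phiP_zero (p : ℝ) : phiP p 0 = 0 := by simp [phiP]

lemma phiP_neg (p t : ℝ) : phiP p (-t) = -phiP p t := by simp [phiP, abs_neg]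

lemma phiP_of_nonneg {p t : ℝ} (hp : 1 < p) (ht : 0 ≤ t) : phiP p t = t ^ (p - 1) := by
  rw [phiP, abs_of_nonneg ht, ← Real.rpow_add_one' ht (by linarith)]
  ring_nf

lemma phiP_two_mul (p t : ℝ) : phiP p (2 * t) = 2 ^ (p - 1) * phiP p t := by
  rw [phiP, phiP, abs_mul, abs_two, Real.mul_rpow zero_le_two (abs_nonneg t),
    show p - 1 = (p - 2) + 1 by ring, Real.rpow_add_one two_ne_zero]
  ring

lemma phiP_pos {p t : ℝ} (hp : 1 < p) (ht : 0 < t) : 0 < phiP p t := by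
  rw [phiP_of_nonneg hp ht.le]
  exact Real.rpow_pos_of_pos ht _

lemma strictMono_phiP {p : ℝ} (hp : 1 < p) : StrictMono (phiP p) := by
  have h_nonneg : StrictMonoOn (phiP p) (Set.Ici 0) := fun a ha b hb hab => by
    rw [phiP_of_nonneg hp ha, phiP_of_nonneg hp hb]
    exact Real.rpow_lt_rpow ha hab (by linarith)
  intro a b hab
  rcases le_total 0 a with ha | ha
  · exact h_nonneg ha (ha.trans hab.le) hab
  rcases le_or_gt b 0 with hb | hb
  · have := h_nonneg (neg_nonneg.2 hb) (neg_nonneg.2 ha) (neg_lt_neg hab)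
    rw [phiP_neg, phiP_neg] at this
    exact neg_lt_neg_iff.1 this
  · calc phiP p a = -(-a) ^ (p - 1) := by
          rw [← phiP_of_nonneg hp (neg_nonneg.2 ha), phiP_neg, neg_neg]
      _ ≤ 0 := neg_nonpos.2 (Real.rpow_nonneg (neg_nonneg.2 ha) _)
      _ < phiP p b := phiP_pos hp hb

section SumBound

variable {ι : Type*} {s : Finset ι} {p a : ℝ} {y : ι → ℝ}

lemma sum_phiP_sub_le (hp : 1 < p) (hy : ∀ j ∈ s, -a ≤ y j) :
    ∑ j ∈ s, phiP p (a - y j) ≤ #s * phiP p (2 * a) := by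
  rw [← nsmul_eq_mul, ← sum_const]
  exact sum_le_sum fun j hj => (strictMono_phiP hp).monotone (by linarith [hy j hj])

lemma sum_phiP_sub_eq_iff (hp : 1 < p) (hy : ∀ j ∈ s, -a ≤ y j) :
    ∑ j ∈ s, phiP p (a - y j) = #s * phiP p (2 * a) ↔ ∀ j ∈ s, y j = -a := by
  rw [← nsmul_eq_mul, ← sum_const,
    sum_eq_sum_iff_of_le fun j hj => (strictMono_phiP hp).monotone (by linarith [hy j hj])]
  refine forall₂_congr fun j _ => ?_
  rw [(strictMono_phiP hp).injective.eq_iff]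
  constructor <;> intro h <;> linarith

end SumBound

lemma SimpleGraph.Reachable.mem_of_adj_mem {V : Type*} {G : SimpleGraph V} {S : Set V}
    (hS : ∀ ⦃u v⦄, G.Adj u v → u ∈ S → v ∈ S) {u v : V} (huv : G.Reachable u v) (hu : u ∈ S) :
    v ∈ S := by
  rw [SimpleGraph.reachable_iff_reflTransGen] at huv
  induction huv with
  | refl => exact hu
  | tail _ hadj ih => exact hS hadj ih

lemma exists_abs_le_abs_of_ne_zero {V : Type*} [Finite V] {x : V → ℝ} (hx : x ≠ 0) :
    ∃ i, x i ≠ 0 ∧ ∀ j, |x j| ≤ |x i| := by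
  obtain ⟨v, hv⟩ := Function.ne_iff.1 hx
  have : Nonempty V := ⟨v⟩
  obtain ⟨i, hi⟩ := Finite.exists_max fun j => |x j|
  refine ⟨i, fun h => hv (abs_eq_zero.1 (le_antisymm ?_ (abs_nonneg _))), hi⟩
  simpa [h] using hi v

namespace IsPLapEigenpair

variable {V : Type*} [Fintype V] [DecidableEq V] {G : SimpleGraph V} [DecidableRel G.Adj]
  {p lam : ℝ} {x : V → ℝ}

lemma neg (h : IsPLapEigenpair G p lam x) : IsPLapEigenpair G p lam (-x) := by
  refine ⟨neg_ne_zero.2 h.1, fun i => ?_⟩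
  simp only [Pi.neg_apply, neg_sub_neg, ← neg_sub (x i), phiP_neg, sum_neg_distrib, h.2 i,
    mul_neg]

lemma le_and_eq_iff_of_pos_of_abs_le (h : IsPLapEigenpair G p lam x) (hp : 1 < p) {i : V}
    (hi : 0 < x i) (hmax : ∀ j, |x j| ≤ x i) :
    lam ≤ 2 ^ (p - 1) * G.degree i ∧
      (lam = 2 ^ (p - 1) * G.degree i ↔ ∀ j ∈ G.neighborFinset i, x j = -x i) := by
  have hy : ∀ j ∈ G.neighborFinset i, -x i ≤ x j := fun j _ => neg_le_of_abs_le (hmax j)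
  have hφ : 0 < phiP p (x i) := phiP_pos hp hi
  have hrhs : (#(G.neighborFinset i) : ℝ) * phiP p (2 * x i) =
      2 ^ (p - 1) * G.degree i * phiP p (x i) := by
    rw [G.card_neighborFinset_eq_degree, phiP_two_mul]
    ring
  have hle := sum_phiP_sub_le hp hy
  have hiff := sum_phiP_sub_eq_iff hp hy
  rw [h.2 i, hrhs] at hle hiff
  exact ⟨le_of_mul_le_mul_right hle hφ, (mul_left_inj' hφ.ne').symm.trans hiff⟩

lemma le_and_eq_iff_of_abs_le (h : IsPLapEigenpair G p lam x) (hp : 1 < p) {i : V}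
    (hi : x i ≠ 0) (hmax : ∀ j, |x j| ≤ |x i|) :
    lam ≤ 2 ^ (p - 1) * G.degree i ∧
      (lam = 2 ^ (p - 1) * G.degree i ↔ ∀ j ∈ G.neighborFinset i, x j = -x i) := by
  rcases hi.lt_or_gt with hneg | hpos
  · have hmax' : ∀ j, |(-x) j| ≤ (-x) i := fun j => by
      simpa [abs_of_neg hneg] using hmax j
    simpa [neg_eq_iff_eq_neg] using
      h.neg.le_and_eq_iff_of_pos_of_abs_le hp (neg_pos.2 hneg) hmax'
  · exact h.le_and_eq_iff_of_pos_of_abs_le hp hpos (by simpa [abs_of_pos hpos] using hmax)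

lemma le_two_rpow_mul_maxDegree (h : IsPLapEigenpair G p lam x) (hp : 1 < p) :
    lam ≤ 2 ^ (p - 1) * G.maxDegree := by
  obtain ⟨i, hi, hmax⟩ := exists_abs_le_abs_of_ne_zero h.1
  refine (h.le_and_eq_iff_of_abs_le hp hi hmax).1.trans ?_
  gcongr
  exact_mod_cast G.degree_le_maxDegree i

lemma exists_bipartite_regular_component (h : IsPLapEigenpair G p (2 ^ (p - 1) * G.maxDegree) x)
    (hp : 1 < p) :
    ∃ c : G.ConnectedComponent,
      (∃ A : Set V, ∀ u v : V, u ∈ c.supp → v ∈ c.supp → G.Adj u v → (u ∈ A ↔ v ∉ A)) ∧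
      (∀ v ∈ c.supp, G.degree v = G.maxDegree) ∧ (∃ v ∈ c.supp, G.degree v = G.maxDegree) := by
  obtain ⟨i, hi, hmax⟩ := exists_abs_le_abs_of_ne_zero h.1
  have hne : ∀ v, |x v| = |x i| → x v ≠ 0 := fun v hv h0 =>
    hi (abs_eq_zero.1 (by rw [← hv, h0, abs_zero]))
  have hmaximal : ∀ v, |x v| = |x i| →
      G.degree v = G.maxDegree ∧ ∀ w, G.Adj v w → x w = -x v := by
    intro v hv
    obtain ⟨hle, heq⟩ := h.le_and_eq_iff_of_abs_le hp (hne v hv) (hv ▸ hmax)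
    have hdeg : G.degree v = G.maxDegree := le_antisymm (G.degree_le_maxDegree v)
      (by exact_mod_cast le_of_mul_le_mul_left hle (by positivity))
    refine ⟨hdeg, fun w hw => heq.1 (by rw [hdeg]) w ((G.mem_neighborFinset v w).2 hw)⟩
  have hcomp : ∀ v ∈ (G.connectedComponentMk i).supp, |x v| = |x i| := fun v hv =>
    (SimpleGraph.ConnectedComponent.exact hv).symm.mem_of_adj_mem (S := {v | |x v| = |x i|})
      (fun u w huw hu => by
        rw [Set.mem_ofPred_eq, (hmaximal u hu).2 w huw, abs_neg]
        exact hu) rfl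
  refine ⟨G.connectedComponentMk i, ⟨{v | 0 < x v}, fun u v hu _ huv => ?_⟩,
    fun v hv => (hmaximal v (hcomp v hv)).1, i, rfl, (hmaximal i rfl).1⟩
  simp only [Set.mem_ofPred_eq, (hmaximal u (hcomp u hu)).2 v huv, neg_pos, not_lt]
  exact ⟨le_of_lt, fun h => h.lt_of_ne (hne u (hcomp u hu)).symm⟩

end IsPLapEigenpair

section Construction

variable {V : Type*} [Fintype V] [DecidableEq V] {G : SimpleGraph V} [DecidableRel G.Adj]

lemma isPLapEigenpair_of_forall_adj_eq_neg (p : ℝ) {d : ℕ} {x : V → ℝ} (hx : x ≠ 0)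
    (hadj : ∀ i j, G.Adj i j → x j = -x i) (hdeg : ∀ i, x i ≠ 0 → G.degree i = d) :
    IsPLapEigenpair G p (2 ^ (p - 1) * d) x := by
  refine ⟨hx, fun i => ?_⟩
  rcases eq_or_ne (x i) 0 with hi | hi
  · have hterm : ∀ j ∈ G.neighborFinset i, phiP p (x i - x j) = 0 := fun j hj => by
      rw [hadj i j ((G.mem_neighborFinset i j).1 hj), hi, neg_zero, sub_zero, phiP_zero]
    rw [sum_eq_zero hterm, hi, phiP_zero, mul_zero]
  · have hterm : ∀ j ∈ G.neighborFinset i, phiP p (x i - x j) = 2 ^ (p - 1) * phiP p (x i) :=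
      fun j hj => by
        rw [hadj i j ((G.mem_neighborFinset i j).1 hj), sub_neg_eq_add, ← two_mul, phiP_two_mul]
    rw [sum_congr rfl hterm, sum_const, G.card_neighborFinset_eq_degree, hdeg i hi, nsmul_eq_mul]
    ring

lemma exists_isPLapEigenpair_of_bipartite_regular_component (p : ℝ) {d : ℕ}
    (c : G.ConnectedComponent) {A : Set V}
    (hA : ∀ u v : V, u ∈ c.supp → v ∈ c.supp → G.Adj u v → (u ∈ A ↔ v ∉ A))
    (hdeg : ∀ v ∈ c.supp, G.degree v = d) :
    ∃ x : V → ℝ, IsPLapEigenpair G p (2 ^ (p - 1) * d) x := by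
  classical
  let x : V → ℝ := fun v => if v ∈ c.supp then (if v ∈ A then 1 else -1) else 0
  have hsupp : ∀ v, x v ≠ 0 ↔ v ∈ c.supp := fun v => by
    by_cases hv : v ∈ c.supp <;> by_cases hvA : v ∈ A <;>
      simp only [x, hv, hvA, if_true, if_false] <;> norm_num
  refine ⟨x, isPLapEigenpair_of_forall_adj_eq_neg p ?_ (fun i j hij => ?_)
    fun i hi => hdeg i ((hsupp i).1 hi)⟩
  · obtain ⟨v, hv⟩ := c.nonempty_supp
    exact Function.ne_iff.2 ⟨v, (hsupp v).2 hv⟩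
  · have hj := c.mem_supp_congr_adj hij
    by_cases hi : i ∈ c.supp
    · have hflip := hA i j hi (hj.1 hi) hij
      by_cases hiA : i ∈ A
      · simp only [x, hi, hj.1 hi, hiA, hflip.1 hiA, if_true, if_false]
      · have hjA : j ∈ A := not_not.1 (mt hflip.2 hiA)
        simp only [x, hi, hj.1 hi, hiA, hjA, if_true, if_false, neg_neg]
    · simp only [x, hi, hj.not.1 hi, if_false, neg_zero]

end Construction

/-- Every eigenvalue `λ` of the graph `p`-Laplacian satisfies `λ ≤ 2^{p-1} d`,
where `d` is the maximum degree; moreover `2^{p-1} d` is an eigenvalue if and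
only if `G` has a bipartite `d`-regular connected component (in particular one
containing a vertex realizing the maximum degree `d`). -/
theorem pLap_eigenvalue_le_and_eq_iff {V : Type*} [Fintype V] [DecidableEq V]
    (G : SimpleGraph V) [DecidableRel G.Adj] (p : ℝ) (hp : 1 < p)
    (d : ℕ) (hd : d = G.maxDegree) :
    (∀ (lam : ℝ) (x : V → ℝ), IsPLapEigenpair G p lam x →
      lam ≤ 2 ^ (p - 1) * (d : ℝ)) ∧
    ((∃ x : V → ℝ, IsPLapEigenpair G p (2 ^ (p - 1) * (d : ℝ)) x) ↔
      ∃ c : G.ConnectedComponent,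
        (∃ A : Set V, ∀ u v : V, u ∈ c.supp → v ∈ c.supp → G.Adj u v →
          (u ∈ A ↔ v ∉ A)) ∧
        (∀ v ∈ c.supp, G.degree v = d) ∧
        (∃ v ∈ c.supp, G.degree v = G.maxDegree)) := by
  subst hd
  refine ⟨fun lam x h => h.le_two_rpow_mul_maxDegree hp,
    fun ⟨x, h⟩ => h.exists_bipartite_regular_component hp, ?_⟩
  rintro ⟨c, ⟨A, hA⟩, hdeg, -⟩
  exact exists_isPLapEigenpair_of_bipartite_regular_component p c hA hdeg
end
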